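/- arXiv:1409.4123 — 5 statements merged into one kernel-verified Lean document; each statement's English description precedes it below -/
import Mathlib

section
/- For every integer r ≥ 2 there is a constant c_r (one may take c_r = 30·(r choose 2)²·log₂ r) such that for every ℓ ≥ 1 and every m ≥ 1, forb(m, r, 𝓣_ℓ(r)) ≤ 2^{c_r·ℓ²}. Equivalently: every m-rowed simple r-matrix with more than r^{30·(r choose 2)²·ℓ²} columns contains, for some a ≠ b ∈ {0,…,r−1}, the matrix I_ℓ(a,b) or the matrix T_ℓ(a,b) as a configuration. -/
/-!
Rows `i` in which no two columns differ only at `i` can be deleted without merging columns and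
without creating configurations. Afterwards every row `i` carries twins: two columns differing
only at `i`, with values `a ≠ b` there. If `r² N` rows carry twins, with `N` a Ramsey number for
`r²` colours and `2ℓ` points, then `N` of them share the pair `(a, b)`, and Ramsey's theorem
applied to the entries of the twins at the other chosen rows produces `I_ℓ` or `T_ℓ`. Otherwise
there are fewer than `r² N` rows, and the classical bound
`((r choose 2 + 1)(m + 1)) ^ ((r choose 2)(ℓ - 1))` for `m`-rowed matrices avoiding every
`T_ℓ(a, b)` gives the estimate.
-/

/-- An `r`-matrix with explicit row and column counts: a matrix with
entries in `{0,1,…,r-1}` (modelled as `Fin r`). -/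
structure RMat (r : ℕ) where
  rows : ℕ
  cols : ℕ
  mat : Matrix (Fin rows) (Fin cols) (Fin r)

/-- A matrix is *simple* if its columns are pairwise distinct. -/
def Simple {r m n : ℕ} (A : Matrix (Fin m) (Fin n) (Fin r)) : Prop :=
  Function.Injective fun j : Fin n => fun i : Fin m => A i j

/-- A matrix is *`s`-simple* if every column appears with multiplicity at most `s`. -/
def SSimple {r m n : ℕ} (s : ℕ) (A : Matrix (Fin m) (Fin n) (Fin r)) : Prop :=
  ∀ c : Fin m → Fin r,
    (Finset.univ.filter fun j : Fin n => (fun i : Fin m => A i j) = c).card ≤ s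

/-- `F` is a *configuration* in `A` (written `F ≺ A`): some row and column
permutation of `F` is a submatrix of `A`; equivalently there are injections
of the rows and the columns of `F` into those of `A` realizing `F`. -/
def ConfigSub {r k l m n : ℕ} (F : Matrix (Fin k) (Fin l) (Fin r))
    (A : Matrix (Fin m) (Fin n) (Fin r)) : Prop :=
  ∃ ρ : Fin k → Fin m, ∃ σ : Fin l → Fin n,
    Function.Injective ρ ∧ Function.Injective σ ∧ ∀ i j, A (ρ i) (σ j) = F i j

/-- Configuration relation for a packaged matrix `F : RMat r`. -/
def ConfigIn {r m n : ℕ} (F : RMat r) (A : Matrix (Fin m) (Fin n) (Fin r)) : Prop :=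
  ConfigSub F.mat A

/-- `A` avoids every member of the family `𝓕`. -/
def AvoidsF {r m n : ℕ} (𝓕 : Set (RMat r)) (A : Matrix (Fin m) (Fin n) (Fin r)) : Prop :=
  ∀ F ∈ 𝓕, ¬ ConfigIn F A

/-- `forb m r 𝓕`: the maximum number of columns of an `m`-rowed simple
`r`-matrix having no member of `𝓕` as a configuration. -/
noncomputable def forb (m r : ℕ) (𝓕 : Set (RMat r)) : ℕ :=
  sSup { n | ∃ A : Matrix (Fin m) (Fin n) (Fin r), Simple A ∧ AvoidsF 𝓕 A }

/-- `forbS m r 𝓕 s`: the analogous maximum over `m`-rowed `s`-simple `r`-matrices. -/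
noncomputable def forbS (m r : ℕ) (𝓕 : Set (RMat r)) (s : ℕ) : ℕ :=
  sSup { n | ∃ A : Matrix (Fin m) (Fin n) (Fin r), SSimple s A ∧ AvoidsF 𝓕 A }

/-- `forbP m r S 𝓕`: as `forb`, but over simple matrices all of whose entries lie
in the set `S ⊆ {0,…,r-1}`. -/
noncomputable def forbP (m r : ℕ) (S : Set (Fin r)) (𝓕 : Set (RMat r)) : ℕ :=
  sSup { n | ∃ A : Matrix (Fin m) (Fin n) (Fin r),
    Simple A ∧ (∀ i j, A i j ∈ S) ∧ AvoidsF 𝓕 A }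

/-- `forbmaxP m r S 𝓕 = max_{1 ≤ m' ≤ m} forbP m' r S 𝓕`. -/
noncomputable def forbmaxP (m r : ℕ) (S : Set (Fin r)) (𝓕 : Set (RMat r)) : ℕ :=
  (Finset.Icc 1 m).sup fun m' => forbP m' r S 𝓕

/-- `I_ℓ(a,b)`: the `ℓ×ℓ` matrix with `a`'s on the diagonal and `b`'s elsewhere. -/
def Imat (ℓ r : ℕ) (a b : Fin r) : Matrix (Fin ℓ) (Fin ℓ) (Fin r) :=
  fun i j => if i = j then a else b

/-- `T_ℓ(a,b)`: the `ℓ×ℓ` matrix with `a`'s strictly below the diagonal and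
`b`'s on and above the diagonal. -/
def Tmat (ℓ r : ℕ) (a b : Fin r) : Matrix (Fin ℓ) (Fin ℓ) (Fin r) :=
  fun i j => if (j : ℕ) < (i : ℕ) then a else b

/-- The family `𝓣_ℓ(r) = {I_ℓ(a,b) : a ≠ b} ∪ {T_ℓ(a,b) : a ≠ b}`. -/
def TFam (ℓ r : ℕ) : Set (RMat r) :=
  { F | ∃ a b : Fin r, a ≠ b ∧
      (F = ⟨ℓ, ℓ, Imat ℓ r a b⟩ ∨ F = ⟨ℓ, ℓ, Tmat ℓ r a b⟩) }

/-- `t·M`: the concatenation of `t` copies of `M`. -/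
def tCopy {r : ℕ} (t : ℕ) (M : RMat r) : RMat r :=
  ⟨M.rows, t * M.cols, fun i j => M.mat i (finProdFinEquiv.symm j).2⟩

open Finset Function
open scoped Matrix

section Occurrence

variable {ι β : Type*}

/-- Like `ConfigSub`, but among a finset of columns `ι → β`, on rows from `s`, and without
injectivity, which is automatic for `Imat` and `Tmat` (`Occurs.configSub`). -/
def Occurs {κ μ : Type*} (M : Matrix κ μ β) (s : Finset ι) (V : Finset (ι → β)) : Prop :=
  ∃ ρ : κ → ι, ∃ σ : μ → ι → β, (∀ u, ρ u ∈ s) ∧ (∀ v, σ v ∈ V) ∧ ∀ u v, σ v (ρ u) = M u v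

theorem occurs_of_isEmpty {κ μ : Type*} [IsEmpty κ] [IsEmpty μ] (M : Matrix κ μ β)
    (s : Finset ι) (V : Finset (ι → β)) : Occurs M s V :=
  ⟨isEmptyElim, isEmptyElim, isEmptyElim, isEmptyElim, isEmptyElim⟩

theorem Occurs.mono {κ μ : Type*} {M : Matrix κ μ β} {s t : Finset ι} {V W : Finset (ι → β)}
    (h : Occurs M s W) (hst : s ⊆ t) (hWV : ∀ g ∈ W, ∃ f ∈ V, ∀ j ∈ s, f j = g j) :
    Occurs M t V := by
  obtain ⟨ρ, σ, hρ, hσ, hM⟩ := h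
  choose L hLV hL using hWV
  exact ⟨ρ, fun v => L (σ v) (hσ v), fun u => hst (hρ u), fun v => hLV _ _,
    fun u v => (hL _ _ _ (hρ u)).trans (hM u v)⟩

variable [DecidableEq ι]

/-- The new row `i` goes last: it carries `x` under the lifts of the old columns and `y` under a
new last column. -/
theorem Occurs.Tmat_succ {r k : ℕ} {s : Finset ι} {i : ι} {B V : Finset (ι → Fin r)}
    {x y : Fin r} (h : Occurs (Tmat k r x y) s B) (hB : B.Nonempty)
    (hx : ∀ g ∈ B, ∃ f ∈ V, f i = x ∧ ∀ j ∈ s, f j = g j)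
    (hy : ∀ g ∈ B, ∃ f ∈ V, f i = y ∧ ∀ j ∈ s, f j = g j) :
    Occurs (Tmat (k + 1) r x y) (insert i s) V := by
  obtain ⟨ρ, σ, hρ, hσ, hM⟩ := h
  obtain ⟨g₀, hg₀, hg₀y⟩ : ∃ g₀ ∈ B, ∀ u, g₀ (ρ u) = y := by
    cases k with
    | zero => exact ⟨hB.choose, hB.choose_spec, fun u => u.elim0⟩
    | succ k =>
      exact ⟨σ (Fin.last k), hσ _, fun u => by simp [hM, Tmat, u.is_le]⟩
  obtain ⟨f₀, hf₀, hf₀i, hf₀s⟩ := hy g₀ hg₀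
  choose L hLV hLi hLs using hx
  refine ⟨Fin.lastCases i ρ, Fin.lastCases f₀ fun v => L (σ v) (hσ v), ?_, ?_, ?_⟩
  · intro u
    induction u using Fin.lastCases <;> simp [hρ]
  · intro v
    induction v using Fin.lastCases <;> simp [hf₀, hLV]
  · intro u v
    induction u using Fin.lastCases with
    | last => induction v using Fin.lastCases <;> simp [Tmat, hf₀i, hLi]
    | cast u =>
      induction v using Fin.lastCases with
      | last => simp [Tmat, hf₀s _ (hρ u), hg₀y]
      | cast v => simp [Tmat, hLs _ _ _ (hρ u), hM]

end Occurrence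

section Collapse

variable {ι β : Type*} [Fintype ι] [DecidableEq ι] [DecidableEq β]

/-- Deleting row `i`, encoded by overwriting it with `z` in every column. -/
def collapse (V : Finset (ι → β)) (i : ι) (z : β) : Finset (ι → β) :=
  V.image (update · i z)

theorem collapse_eq_const {V : Finset (ι → β)} {s t : Finset ι} {i : ι} {z : β}
    (hV : ∀ f ∈ V, ∀ j ∉ t, f j = z) (hts : t ⊆ insert i s) :
    ∀ g ∈ collapse V i z, ∀ j ∉ s, g j = z := by
  simp only [collapse, mem_image, forall_exists_index, and_imp]
  rintro _ f hf rfl j hj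
  by_cases hji : j = i
  · simp [hji]
  · rw [update_of_ne hji]
    exact hV f hf j fun hjt => by simpa [hji, hj] using hts hjt

theorem exists_eq_on_of_mem_collapse {V : Finset (ι → β)} {s : Finset ι} {i : ι} {z : β}
    (hi : i ∉ s) : ∀ g ∈ collapse V i z, ∃ f ∈ V, ∀ j ∈ s, f j = g j := by
  simp only [collapse, mem_image, forall_exists_index, and_imp]
  rintro _ f hf rfl
  exact ⟨f, hf, fun j hj => (update_of_ne (ne_of_mem_of_not_mem hj hi) _ _).symm⟩

def HasTwinAt (V : Finset (ι → β)) (i : ι) : Prop :=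
  ∃ f ∈ V, ∃ g ∈ V, f i ≠ g i ∧ ∀ j ≠ i, f j = g j

theorem card_collapse_of_not_hasTwinAt {V : Finset (ι → β)} {i : ι} (z : β)
    (h : ¬ HasTwinAt V i) : (collapse V i z).card = V.card := by
  refine card_image_of_injOn fun f hf g hg hfg => ?_
  have hoff : ∀ j ≠ i, f j = g j := fun j hj => by
    simpa [update_of_ne hj] using congr_fun hfg j
  funext j
  by_cases hj : j = i
  · subst hj
    by_contra hne
    exact h ⟨f, hf, g, hg, hne, hoff⟩
  · exact hoff j hj

/-- A row without twins can be deleted without merging columns. -/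
theorem exists_collapse_forall_hasTwinAt (z : β) (s : Finset ι) (V : Finset (ι → β))
    (hV : ∀ f ∈ V, ∀ j ∉ s, f j = z) :
    ∃ t ⊆ s, ∃ W : Finset (ι → β), W.card = V.card ∧ (∀ i ∈ t, HasTwinAt W i) ∧
      (∀ g ∈ W, ∀ j ∉ t, g j = z) ∧ ∀ g ∈ W, ∃ f ∈ V, ∀ j ∈ t, f j = g j := by
  induction s using Finset.strongInduction generalizing V with
  | H s ih =>
  by_cases htwin : ∀ i ∈ s, HasTwinAt V i
  · exact ⟨s, subset_rfl, V, rfl, htwin, hV, fun g hg => ⟨g, hg, fun _ _ => rfl⟩⟩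
  push Not at htwin
  obtain ⟨i, hi, hno⟩ := htwin
  obtain ⟨t, hts, W, hcard, hWtwin, hW, hWV⟩ := ih (s.erase i) (erase_ssubset hi)
    (collapse V i z) (collapse_eq_const hV (insert_erase hi).ge)
  refine ⟨t, hts.trans (erase_subset i s), W,
    hcard.trans (card_collapse_of_not_hasTwinAt z hno), hWtwin, hW, fun g hg => ?_⟩
  obtain ⟨g', hg', hgg'⟩ := hWV g hg
  obtain ⟨f, hf, hfg'⟩ := exists_eq_on_of_mem_collapse (notMem_erase i s) g' hg'
  exact ⟨f, hf, fun j hj => (hfg' j (hts hj)).trans (hgg' j hj)⟩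

def fiberValues (V : Finset (ι → β)) (i : ι) (z : β) (g : ι → β) : Finset β :=
  (V.filter (update · i z = g)).image (· i)

theorem mem_fiberValues {V : Finset (ι → β)} {i : ι} {z : β} {g : ι → β} {a : β} :
    a ∈ fiberValues V i z g ↔ ∃ f ∈ V, update f i z = g ∧ f i = a := by
  simp [fiberValues, and_assoc]

variable [Fintype β]

variable (β) in
def offDiagSym2 : Finset (Sym2 β) := {e | ¬ e.IsDiag}

theorem card_offDiagSym2 : (offDiagSym2 β).card = (Fintype.card β).choose 2 := by
  rw [offDiagSym2, ← Fintype.card_subtype, Sym2.card_subtype_not_diag]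

theorem card_le_one_add_card_offDiagSym2_subset (X : Finset β) :
    X.card ≤ 1 + ((offDiagSym2 β).filter (· ∈ X.sym2)).card := by
  obtain rfl | ⟨a, ha⟩ := X.eq_empty_or_nonempty
  · simp
  have hmaps : ∀ b ∈ X.erase a, s(a, b) ∈ (offDiagSym2 β).filter (· ∈ X.sym2) := by
    intro b hb
    simp only [offDiagSym2, mem_filter, mem_univ, true_and, Sym2.mk_isDiag_iff, mk_mem_sym2_iff]
    exact ⟨(ne_of_mem_erase hb).symm, ha, mem_of_mem_erase hb⟩
  have := card_le_card_of_injOn _ hmaps fun b _ c _ h => Sym2.congr_right.mp h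
  rw [card_erase_of_mem ha] at this
  omega

def doubled (V : Finset (ι → β)) (i : ι) (z : β) (e : Sym2 β) : Finset (ι → β) :=
  (collapse V i z).filter fun g => e ∈ (fiberValues V i z g).sym2

theorem card_le_card_collapse_add_sum_card_doubled (V : Finset (ι → β)) (i : ι) (z : β) :
    V.card ≤ (collapse V i z).card + ∑ e ∈ offDiagSym2 β, (doubled V i z e).card := by
  have hfiber : ∀ g, (V.filter (update · i z = g)).card = (fiberValues V i z g).card := by
    refine fun g => (card_image_of_injOn fun f hf f' hf' hff' => ?_).symm
    simp only [coe_filter, Set.mem_ofPred_eq] at hf hf' hff'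
    calc f = update g i (f i) := by rw [← hf.2, update_idem, update_eq_self]
      _ = f' := by rw [hff', ← hf'.2, update_idem, update_eq_self]
  calc V.card = ∑ g ∈ collapse V i z, (fiberValues V i z g).card := by
        simp only [← hfiber]; exact card_eq_sum_card_image _ V
    _ ≤ ∑ g ∈ collapse V i z,
          (1 + ((offDiagSym2 β).filter (· ∈ (fiberValues V i z g).sym2)).card) :=
        sum_le_sum fun g _ => card_le_one_add_card_offDiagSym2_subset _
    _ = (collapse V i z).card + ∑ e ∈ offDiagSym2 β, (doubled V i z e).card := by
        rw [sum_add_distrib, sum_const, smul_eq_mul, mul_one]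
        congr 1
        exact sum_card_bipartiteAbove_eq_sum_card_bipartiteBelow _

end Collapse

theorem le_add_card_pow_of_le_pow_add_sum {α : Type*} {S : Finset α} {b : α → ℕ} {n X E : ℕ}
    (hn : n ≤ X ^ E + ∑ e ∈ S, b e) (hb : ∀ e ∈ S, b e ≠ 0 → 1 ≤ E ∧ b e ≤ X ^ (E - 1)) :
    n ≤ (X + S.card) ^ E := by
  rcases Nat.eq_zero_or_pos E with rfl | hE
  · have hzero : ∑ e ∈ S, b e = 0 := sum_eq_zero fun e he => by
      by_contra h
      have := (hb e he h).1
      omega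
    simpa [hzero] using hn
  obtain ⟨E, rfl⟩ : ∃ E', E = E' + 1 := ⟨E - 1, by omega⟩
  have hsum : ∑ e ∈ S, b e ≤ S.card * X ^ E := by
    rw [← smul_eq_mul, ← sum_const]
    exact sum_le_sum fun e he => (eq_or_ne (b e) 0).elim (fun h => h ▸ Nat.zero_le _)
      fun h => (hb e he h).2
  calc n ≤ X ^ E * (X + S.card) := by rw [mul_add, ← pow_succ, mul_comm]; omega
    _ ≤ (X + S.card) ^ E * (X + S.card) := by gcongr; omega
    _ = (X + S.card) ^ (E + 1) := (pow_succ _ _).symm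

section TriangularBound

variable {ι : Type*} [Fintype ι] [DecidableEq ι] {r : ℕ}

theorem not_occurs_Tmat_doubled {s : Finset ι} {i : ι} (hi : i ∉ s) {V : Finset (ι → Fin r)}
    {z : Fin r} {k : Sym2 (Fin r) → ℕ}
    (hT : ∀ a b, a ≠ b → ¬ Occurs (Tmat (k s(a, b) + 1) r a b) (insert i s) V)
    {a b : Fin r} (hab : a ≠ b) (hne : (doubled V i z s(a, b)).Nonempty) :
    1 ≤ k s(a, b) ∧ ∀ c d, c ≠ d →
      ¬ Occurs (Tmat (update k s(a, b) (k s(a, b) - 1) s(c, d) + 1) r c d) s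
        (doubled V i z s(a, b)) := by
  have hlift : ∀ c ∈ s(a, b), ∀ g ∈ doubled V i z s(a, b),
      ∃ f ∈ V, f i = c ∧ ∀ j ∈ s, f j = g j := by
    intro c hc g hg
    obtain ⟨f, hf, rfl, hfi⟩ := mem_fiberValues.mp (mem_sym2_iff.mp (mem_filter.mp hg).2 c hc)
    exact ⟨f, hf, hfi, fun j hj => (update_of_ne (ne_of_mem_of_not_mem hj hi) _ _).symm⟩
  have hext : ∀ c d, s(c, d) = s(a, b) → ∀ n, Occurs (Tmat n r c d) s (doubled V i z s(a, b)) →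
      Occurs (Tmat (n + 1) r c d) (insert i s) V := fun c d hcd n h =>
    h.Tmat_succ hne (hlift c (hcd ▸ Sym2.mem_mk_left c d))
      (hlift d (hcd ▸ Sym2.mem_mk_right c d))
  have hk : 1 ≤ k s(a, b) := by
    by_contra! h0
    apply hT a b hab
    rw [Nat.lt_one_iff.mp h0]
    exact hext a b rfl 0 (occurs_of_isEmpty _ _ _)
  refine ⟨hk, fun c d hcd h => hT c d hcd ?_⟩
  by_cases he : s(c, d) = s(a, b)
  · rw [he, update_self, Nat.sub_add_cancel hk] at h
    rw [he]
    exact hext c d he _ h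
  · rw [update_of_ne he] at h
    exact h.mono (subset_insert i s) fun g hg =>
      exists_eq_on_of_mem_collapse hi g (filter_subset _ _ hg)

/-- Deleting a row `i` merges columns only over pairs `e` of values in row `i`; the merged
columns `doubled V i z e` lift with both values of `e`, so they avoid the shorter `T_{k e}`. -/
theorem card_le_of_not_occurs_Tmat (z : Fin r) (k : Sym2 (Fin r) → ℕ) (s : Finset ι)
    (V : Finset (ι → Fin r)) (hV : ∀ f ∈ V, ∀ j ∉ s, f j = z)
    (hT : ∀ a b, a ≠ b → ¬ Occurs (Tmat (k s(a, b) + 1) r a b) s V) :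
    V.card ≤ ((r.choose 2 + 1) * (s.card + 1)) ^ ∑ e ∈ offDiagSym2 (Fin r), k e := by
  induction s using Finset.induction_on generalizing k V with
  | empty =>
    have hV1 : V.card ≤ 1 := card_le_one.mpr fun f hf g hg => funext fun j =>
      (hV f hf j (notMem_empty j)).trans (hV g hg j (notMem_empty j)).symm
    exact hV1.trans (Nat.one_le_pow _ _ (by positivity))
  | insert i s hi ih =>
    set X := (r.choose 2 + 1) * (s.card + 1)
    set E := ∑ e ∈ offDiagSym2 (Fin r), k e with hEdef
    have hU : (collapse V i z).card ≤ X ^ E := ih k _ (collapse_eq_const hV subset_rfl)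
      fun a b hab h => hT a b hab (h.mono (subset_insert i s) (exists_eq_on_of_mem_collapse hi))
    have hB : ∀ e ∈ offDiagSym2 (Fin r), (doubled V i z e).Nonempty →
        1 ≤ E ∧ (doubled V i z e).card ≤ X ^ (E - 1) := by
      intro e he hne
      induction e using Sym2.ind with | _ a b =>
      have hab : a ≠ b := by simpa [offDiagSym2] using he
      obtain ⟨hk, hT'⟩ := not_occurs_Tmat_doubled hi hT hab hne
      have hkE : k s(a, b) ≤ E := single_le_sum (fun _ _ => Nat.zero_le _) he
      have hsum : ∑ e ∈ offDiagSym2 (Fin r), update k s(a, b) (k s(a, b) - 1) e = E - 1 := by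
        rw [sum_update_of_mem he, sdiff_singleton_eq_erase, hEdef, ← add_sum_erase _ _ he]
        omega
      refine ⟨hk.trans hkE, hsum ▸ ih _ _ ?_ hT'⟩
      exact fun g hg => collapse_eq_const hV subset_rfl g (filter_subset _ _ hg)
    calc V.card ≤ (X + (offDiagSym2 (Fin r)).card) ^ E :=
          le_add_card_pow_of_le_pow_add_sum
            ((card_le_card_collapse_add_sum_card_doubled V i z).trans (by omega))
            fun e he h => hB e he (card_ne_zero.mp h)
      _ ≤ ((r.choose 2 + 1) * ((insert i s).card + 1)) ^ E := by
          rw [card_offDiagSym2, Fintype.card_fin, card_insert_of_notMem hi]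
          gcongr
          simp only [X]
          ring_nf
          omega

end TriangularBound

section Ramsey

variable {ι κ : Type*} [LinearOrder ι] [Fintype κ] [DecidableEq κ]

/-- Take the least point, keep the largest colour class of its edges, and recurse. -/
theorem exists_endHomogeneous (hκ : 2 ≤ Fintype.card κ) (χ : ι → ι → κ) (L : ℕ)
    (A : Finset ι) (hA : Fintype.card κ ^ L ≤ A.card) :
    ∃ S ⊆ A, L ≤ S.card ∧ ∃ γ : ι → κ, ∀ x ∈ S, ∀ y ∈ S, x < y → χ x y = γ x := by
  induction L generalizing A with
  | zero => exact ⟨∅, empty_subset A, le_rfl, fun x => χ x x, by simp⟩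
  | succ L ih =>
    have hA₀ : A.Nonempty := card_pos.mp (lt_of_lt_of_le (by positivity) hA)
    set x₀ := A.min' hA₀
    have hpow : Fintype.card κ * (Fintype.card κ ^ L - 1) < (A.erase x₀).card := by
      obtain ⟨P, hP⟩ : ∃ P, Fintype.card κ ^ L = P + 1 :=
        ⟨_, (Nat.succ_pred_eq_of_pos (by positivity)).symm⟩
      rw [pow_succ, hP] at hA
      have : (P + 1) * Fintype.card κ = Fintype.card κ * P + Fintype.card κ := by ring
      rw [card_erase_of_mem (A.min'_mem hA₀), hP, Nat.add_sub_cancel]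
      omega
    obtain ⟨c, -, hc⟩ := exists_lt_card_fiber_of_mul_lt_card_of_maps_to
      (f := χ x₀) (t := univ) (fun _ _ => mem_univ _) (by simpa using hpow)
    obtain ⟨S, hSA, hS, γ, hγ⟩ := ih {y ∈ A.erase x₀ | χ x₀ y = c} (by omega)
    have hx₀S : ∀ y ∈ S, x₀ < y ∧ y ∈ A ∧ χ x₀ y = c := fun y hy => by
      obtain ⟨hy, hyc⟩ := mem_filter.mp (hSA hy)
      exact ⟨A.min'_lt_of_mem_erase_min' hA₀ hy, mem_of_mem_erase hy, hyc⟩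
    refine ⟨insert x₀ S, insert_subset (A.min'_mem hA₀) fun y hy => (hx₀S y hy).2.1, ?_,
      update γ x₀ c, ?_⟩
    · rw [card_insert_of_notMem fun h => (hx₀S x₀ h).1.false]
      omega
    · intro x hx y hy hxy
      rw [mem_insert] at hx hy
      rcases hx with rfl | hx <;> rcases hy with rfl | hy
      · exact absurd hxy (lt_irrefl _)
      · rw [update_self, (hx₀S y hy).2.2]
      · exact absurd hxy (hx₀S x hx).1.asymm
      · rw [update_of_ne (hx₀S x hx).1.ne', hγ x hx y hy hxy]

theorem exists_orderEmbedding_homogeneous (hκ : 2 ≤ Fintype.card κ) (χ : ι → ι → κ) (K : ℕ)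
    (A : Finset ι) (hA : Fintype.card κ ^ (Fintype.card κ * K + 1) ≤ A.card) :
    ∃ x : Fin K ↪o ι, (∀ u, x u ∈ A) ∧ ∃ c, ∀ u v, u < v → χ (x u) (x v) = c := by
  obtain ⟨S, hSA, hS, γ, hγ⟩ := exists_endHomogeneous hκ χ _ A hA
  obtain ⟨c, -, hc⟩ := exists_lt_card_fiber_of_mul_lt_card_of_maps_to (s := S) (f := γ)
    (t := univ) (n := K - 1) (fun _ _ => mem_univ _) (by
      rw [card_univ]
      have := Nat.mul_le_mul_left (Fintype.card κ) (Nat.sub_le K 1)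
      omega)
  obtain ⟨T, hTS, hT⟩ := exists_subset_card_eq (show K ≤ (S.filter (γ · = c)).card by omega)
  have hT' : ∀ u, T.orderEmbOfFin hT u ∈ S ∧ γ (T.orderEmbOfFin hT u) = c := fun u =>
    mem_filter.mp (hTS (T.orderEmbOfFin_mem hT u))
  refine ⟨T.orderEmbOfFin hT, fun u => hSA (hT' u).1, c, fun u v huv => ?_⟩
  rw [hγ _ (hT' u).1 _ (hT' v).1 ((T.orderEmbOfFin hT).strictMono huv), (hT' u).2]

end Ramsey

section Twins

variable {ι : Type*} [LinearOrder ι] {r : ℕ}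

/-- Colour a pair of rows `u < v` by `(F v u, F u v)` and apply Ramsey to `2ℓ` rows: equal
colours give an `I_ℓ` (with the `G`s if the colour is `a`), distinct colours give a `T_ℓ` on
interleaved rows and columns. -/
theorem exists_occurs_Tmat_or_Imat_of_twins (hr : 2 ≤ r) {s R : Finset ι}
    {V : Finset (ι → Fin r)} (hRs : R ⊆ s) {F G : ι → ι → Fin r} {a b : Fin r} (hab : a ≠ b)
    (hF : ∀ i ∈ R, F i ∈ V) (hG : ∀ i ∈ R, G i ∈ V) (hFa : ∀ i ∈ R, F i i = a)
    (hGb : ∀ i ∈ R, G i i = b) (hFG : ∀ i ∈ R, ∀ j ≠ i, F i j = G i j) (ℓ : ℕ)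
    (hR : (r * r) ^ (r * r * (2 * ℓ) + 1) ≤ R.card) :
    ∃ x y, x ≠ y ∧ (Occurs (Tmat ℓ r x y) s V ∨ Occurs (Imat ℓ r x y) s V) := by
  obtain ⟨p, hpR, ⟨c₁, c₂⟩, hc⟩ := exists_orderEmbedding_homogeneous (κ := Fin r × Fin r)
    (by simp; nlinarith) (fun u v => (F v u, F u v)) (2 * ℓ) R (by simpa using hR)
  have hp : ∀ u v, u < v → F (p v) (p u) = c₁ ∧ F (p u) (p v) = c₂ := fun u v huv =>
    Prod.ext_iff.mp (hc u v huv)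
  let ev : Fin ℓ → Fin (2 * ℓ) := fun u => ⟨2 * u, by omega⟩
  let od : Fin ℓ → Fin (2 * ℓ) := fun u => ⟨2 * u + 1, by omega⟩
  have hev : StrictMono ev := fun u v h => Fin.mk_lt_mk.mpr (by omega)
  by_cases hc₁₂ : c₁ = c₂
  · have hoff : ∀ u v, u ≠ v → F (p (ev v)) (p (ev u)) = c₁ := by
      intro u v huv
      rcases lt_or_gt_of_ne huv with h | h
      · exact (hp (ev u) (ev v) (hev h)).1
      · exact hc₁₂ ▸ (hp (ev v) (ev u) (hev h)).2
    by_cases hc₁a : c₁ = a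
    · refine ⟨b, a, hab.symm, .inr ⟨fun u => p (ev u), fun v => G (p (ev v)),
        fun u => hRs (hpR _), fun v => hG _ (hpR _), fun u v => ?_⟩⟩
      by_cases huv : u = v
      · simp [Imat, huv, hGb _ (hpR _)]
      · show G (p (ev v)) (p (ev u)) = if u = v then b else a
        rw [if_neg huv, ← hFG _ (hpR _) _ (p.injective.ne (hev.injective.ne huv)),
          hoff u v huv, hc₁a]
    · refine ⟨a, c₁, Ne.symm hc₁a, .inr ⟨fun u => p (ev u), fun v => F (p (ev v)),
        fun u => hRs (hpR _), fun v => hF _ (hpR _), fun u v => ?_⟩⟩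
      by_cases huv : u = v
      · simp [Imat, huv, hFa _ (hpR _)]
      · show F (p (ev v)) (p (ev u)) = if u = v then a else c₁
        rw [if_neg huv, hoff u v huv]
  · refine ⟨c₂, c₁, Ne.symm hc₁₂, .inl ⟨fun u => p (ev u), fun v => F (p (od v)),
      fun u => hRs (hpR _), fun v => hF _ (hpR _), fun u v => ?_⟩⟩
    by_cases hvu : (v : ℕ) < u
    · rw [Tmat, if_pos hvu]
      exact (hp (od v) (ev u) (Fin.mk_lt_mk.mpr (by omega))).2
    · rw [Tmat, if_neg hvu]
      exact (hp (ev u) (od v) (Fin.mk_lt_mk.mpr (by omega))).1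

theorem card_lt_of_forall_hasTwinAt {ℓ : ℕ} (hr : 2 ≤ r) {s : Finset ι} {V : Finset (ι → Fin r)}
    (htwin : ∀ i ∈ s, HasTwinAt V i) (hT : ∀ a b, a ≠ b → ¬ Occurs (Tmat ℓ r a b) s V)
    (hI : ∀ a b, a ≠ b → ¬ Occurs (Imat ℓ r a b) s V) :
    s.card < r * r * (r * r) ^ (r * r * (2 * ℓ) + 1) := by
  have : Nonempty (Fin r) := ⟨⟨0, by omega⟩⟩
  choose! F hF G hG hFG hoff using htwin
  by_contra! hs
  obtain ⟨⟨a, b⟩, -, hR⟩ := exists_le_card_fiber_of_mul_le_card_of_maps_to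
    (f := fun i => (F i i, G i i)) (fun _ _ => mem_univ _) univ_nonempty (by simpa using hs)
  have hmem : ∀ i ∈ {i ∈ s | (F i i, G i i) = (a, b)}, i ∈ s ∧ F i i = a ∧ G i i = b := by
    simp +contextual
  obtain ⟨i, hi⟩ := card_pos.mp (hR.trans_lt' (by positivity))
  have hab : a ≠ b := by
    obtain ⟨his, rfl, rfl⟩ := hmem i hi
    exact hFG i his
  obtain ⟨x, y, hxy, h⟩ := exists_occurs_Tmat_or_Imat_of_twins hr (filter_subset _ s) hab
    (fun i hi => hF i (hmem i hi).1) (fun i hi => hG i (hmem i hi).1)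
    (fun i hi => (hmem i hi).2.1) (fun i hi => (hmem i hi).2.2)
    (fun i hi => hoff i (hmem i hi).1) ℓ hR
  exact h.elim (hT x y hxy) (hI x y hxy)

end Twins

section MatrixPatterns

variable {ℓ r : ℕ} {a b : Fin r}

theorem Tmat_injective (hab : a ≠ b) : Injective (Tmat ℓ r a b) := by
  intro u u' h
  by_contra hne
  rcases lt_or_gt_of_ne hne with h' | h'
  · simpa [Tmat, h', hab.symm] using congr_fun h u
  · simpa [Tmat, h', hab] using congr_fun h u'

theorem Tmat_transpose_injective (hab : a ≠ b) : Injective (Tmat ℓ r a b)ᵀ := by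
  intro v v' h
  by_contra hne
  rcases lt_or_gt_of_ne hne with h' | h'
  · simpa [Tmat, h', hab] using congr_fun h v'
  · simpa [Tmat, h', hab.symm] using congr_fun h v

theorem Imat_injective (hab : a ≠ b) : Injective (Imat ℓ r a b) := by
  intro u u' h
  simpa [Imat, hab, eq_comm] using congr_fun h u

theorem Imat_transpose : (Imat ℓ r a b)ᵀ = Imat ℓ r a b := by
  ext u v
  simp [Imat, eq_comm]

theorem Occurs.configSub {k l m n : ℕ} {M : Matrix (Fin k) (Fin l) (Fin r)}
    {A : Matrix (Fin m) (Fin n) (Fin r)} {s : Finset (Fin m)}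
    (h : Occurs M s (univ.image fun j i => A i j)) (hrow : Injective M)
    (hcol : Injective Mᵀ) : ConfigSub M A := by
  obtain ⟨ρ, σ, -, hσ, hM⟩ := h
  choose C _ hC using fun v => mem_image.mp (hσ v)
  have hA : ∀ u v, A (ρ u) (C v) = M u v := fun u v => by rw [← hM, ← hC]
  refine ⟨ρ, C, fun u u' hu => hrow ?_, fun v v' hv => hcol ?_, hA⟩
  · funext v
    rw [← hA, ← hA, hu]
  · funext u
    simp only [Matrix.transpose_apply, ← hA, hv]

end MatrixPatterns

theorem two_mul_choose_two_add_self (r : ℕ) : 2 * r.choose 2 + r = r * r := by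
  obtain _ | n := r
  · rfl
  · have := Nat.add_one_mul_choose_eq n 1
    rw [Nat.choose_one_right] at this
    linarith

theorem exponent_le_thirty_mul_choose_two_sq {r ℓ : ℕ} (hr : 2 ≤ r) (hℓ : 1 ≤ ℓ) :
    2 * (r * r * (2 * ℓ) + 3) * (r.choose 2 * (ℓ - 1)) ≤ 30 * r.choose 2 ^ 2 * ℓ ^ 2 := by
  have h2C := two_mul_choose_two_add_self r
  have hrr : 2 * r ≤ r * r := Nat.mul_le_mul_right r hr
  have hrC : r * r ≤ 4 * r.choose 2 := by omega
  have h3 : 3 ≤ 3 * r.choose 2 * ℓ := by nlinarith [Nat.choose_pos hr]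
  calc 2 * (r * r * (2 * ℓ) + 3) * (r.choose 2 * (ℓ - 1))
      ≤ 2 * (4 * r.choose 2 * (2 * ℓ) + 3 * r.choose 2 * ℓ) * (r.choose 2 * ℓ) := by
        gcongr 2 * (?_ + ?_) * (_ * ?_)
        · exact Nat.mul_le_mul_right _ hrC
        · exact Nat.sub_le ℓ 1
    _ ≤ 30 * r.choose 2 ^ 2 * ℓ ^ 2 := by nlinarith

section MainBound

variable {ι : Type*} [Fintype ι] [LinearOrder ι] {r ℓ : ℕ}

theorem card_le_of_forall_hasTwinAt (hr : 2 ≤ r) (hℓ : 1 ≤ ℓ) (z : Fin r) {s : Finset ι}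
    {V : Finset (ι → Fin r)} (hV : ∀ f ∈ V, ∀ j ∉ s, f j = z) (htwin : ∀ i ∈ s, HasTwinAt V i)
    (hT : ∀ a b, a ≠ b → ¬ Occurs (Tmat ℓ r a b) s V)
    (hI : ∀ a b, a ≠ b → ¬ Occurs (Imat ℓ r a b) s V) :
    V.card ≤ r ^ (30 * r.choose 2 ^ 2 * ℓ ^ 2) := by
  have hs := card_lt_of_forall_hasTwinAt hr htwin hT hI
  have hpoly := card_le_of_not_occurs_Tmat z (fun _ => ℓ - 1) s V hV
    fun a b hab => by rw [Nat.sub_add_cancel hℓ]; exact hT a b hab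
  rw [sum_const, card_offDiagSym2, Fintype.card_fin, smul_eq_mul] at hpoly
  have hC : r.choose 2 + 1 ≤ r * r := by linarith [two_mul_choose_two_add_self r]
  calc V.card ≤ ((r.choose 2 + 1) * (s.card + 1)) ^ (r.choose 2 * (ℓ - 1)) := hpoly
    _ ≤ ((r * r) ^ (r * r * (2 * ℓ) + 3)) ^ (r.choose 2 * (ℓ - 1)) := by
        gcongr
        calc (r.choose 2 + 1) * (s.card + 1)
            ≤ r * r * (r * r * (r * r) ^ (r * r * (2 * ℓ) + 1)) := Nat.mul_le_mul hC hs
          _ = (r * r) ^ (r * r * (2 * ℓ) + 3) := by ring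
    _ = r ^ (2 * (r * r * (2 * ℓ) + 3) * (r.choose 2 * (ℓ - 1))) := by
        rw [← sq r, ← pow_mul, ← pow_mul, mul_assoc]
    _ ≤ r ^ (30 * r.choose 2 ^ 2 * ℓ ^ 2) :=
        Nat.pow_le_pow_right (by omega) (exponent_le_thirty_mul_choose_two_sq hr hℓ)

theorem card_le_of_not_occurs (hr : 2 ≤ r) (hℓ : 1 ≤ ℓ) (z : Fin r) (s : Finset ι)
    (V : Finset (ι → Fin r)) (hV : ∀ f ∈ V, ∀ j ∉ s, f j = z)
    (hT : ∀ a b, a ≠ b → ¬ Occurs (Tmat ℓ r a b) s V)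
    (hI : ∀ a b, a ≠ b → ¬ Occurs (Imat ℓ r a b) s V) :
    V.card ≤ r ^ (30 * r.choose 2 ^ 2 * ℓ ^ 2) := by
  obtain ⟨t, hts, W, hWV, htwin, hW, hdom⟩ := exists_collapse_forall_hasTwinAt z s V hV
  rw [← hWV]
  exact card_le_of_forall_hasTwinAt hr hℓ z hW htwin
    (fun a b hab h => hT a b hab (h.mono hts hdom))
    (fun a b hab h => hI a b hab (h.mono hts hdom))

end MainBound

theorem forb_TFam_le_general (r : ℕ) (hr : 2 ≤ r) (ℓ : ℕ) (hℓ : 1 ≤ ℓ) (m : ℕ) :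
    forb m r (TFam ℓ r) ≤ r ^ (30 * (r.choose 2) ^ 2 * ℓ ^ 2) := by
  refine csSup_le' fun n ⟨A, hA, hAvoid⟩ => ?_
  have hcard : (univ.image fun j i => A i j).card = n := by
    rw [card_image_of_injective _ hA, card_univ, Fintype.card_fin]
  rw [← hcard]
  refine card_le_of_not_occurs hr hℓ ⟨0, by omega⟩ univ _ (by simp)
    (fun a b hab h => hAvoid _ ⟨a, b, hab, .inr rfl⟩ ?_)
    (fun a b hab h => hAvoid _ ⟨a, b, hab, .inl rfl⟩ ?_)
  · exact h.configSub (Tmat_injective hab) (Tmat_transpose_injective hab)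
  · exact h.configSub (Imat_injective hab) (Imat_transpose ▸ Imat_injective hab)

/-- For every `r ≥ 2`, with the constant
`c_r = 30·(r choose 2)²·log₂ r` (so that `2^{c_r·ℓ²} = r^{30·(r choose 2)²·ℓ²}`),
for every `ℓ ≥ 1` and `m ≥ 1`,
`forb(m, r, 𝓣_ℓ(r)) ≤ 2^{c_r·ℓ²} = r^{30·(r choose 2)²·ℓ²}`. -/
theorem forb_TFam_le (r : ℕ) (hr : 2 ≤ r) (ℓ : ℕ) (hℓ : 1 ≤ ℓ) (m : ℕ) (hm : 1 ≤ m) :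
    forb m r (TFam ℓ r) ≤ r ^ (30 * (r.choose 2) ^ 2 * ℓ ^ 2) :=
  forb_TFam_le_general r hr ℓ hℓ m
end

section
/- For every ℓ ≥ 2 and every m ≥ 1, forb(m, 2, 𝓣_ℓ(2)) < 6^{6ℓ(ℓ−1)}, and consequently forb(m, {I_ℓ, I_ℓ^c, T_ℓ}) ≤ forb(m, 2, 𝓣_{ℓ+1}(2)) < 6^{6ℓ(ℓ+1)}. -/
/-!
Columns are encoded as functions `ℕ → Fin 2` vanishing off a finite row set. We bound the size of a
family `F` of columns containing no `I_ℓ(a,b)` and no `T_ℓ(a,b)` next to a column that is constant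
on its rows (`Free ℓ F`), by induction on `ℓ` and on the number of rows. Deleting a row `x` loses
one column for each pair of columns differing only in `x` (`twins F x`), and the twins are
`Free (ℓ - 1)`: a configuration among them extends by the row `x` to one of size `ℓ` in `F`. So a
row without twins is deleted for free. If every row `y` has twin columns `c_y`, colour the pairs
`y < z` by `(c_y z, c_z y)`: Ramsey's theorem for four colours gives `ℓ + 1` rows on which the
`c_y`, whose diagonal entries can be chosen freely, form an `I_ℓ` or a `T_ℓ` next to a constant
column. Hence fewer than `5 ^ (4(ℓ+1))` deletions cost anything, which gives the recursion of
`freeBound`.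

For the second part, every member of `𝓣_{ℓ+1}(2)` contains `I_ℓ`, `I_ℓᶜ` or `T_ℓ`; for
`T_{ℓ+1}(1,0)` reverse the rows and the columns.
-/

open Finset Function
open scoped Matrix Classical

namespace TFamBound

section Ramsey

variable {α κ : Type*} [LinearOrder α] [Fintype κ] [Nonempty κ]

-- The least element is a pivot; recurse into its largest colour class.
theorem exists_pivots (col : α → α → κ) :
    ∀ (k : ℕ) (A : Finset α), (Fintype.card κ + 1) ^ k ≤ #A →
      ∃ P ⊆ A, #P = k ∧ ∃ c : α → κ, ∀ y ∈ P, ∀ z ∈ P, y < z → col y z = c y := by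
  intro k
  induction k with
  | zero => exact fun A _ => ⟨∅, empty_subset A, rfl, fun _ => Classical.arbitrary κ, by simp⟩
  | succ k ih =>
    intro A hA
    have hA0 : A.Nonempty := card_pos.1 (lt_of_lt_of_le (by positivity) hA)
    set x := A.min' hA0
    have hxA : x ∈ A := min'_mem A hA0
    have hfib : Fintype.card κ * (Fintype.card κ + 1) ^ k ≤ #(A.erase x) := by
      rw [card_erase_of_mem hxA]
      have : 1 ≤ (Fintype.card κ + 1) ^ k := Nat.one_le_pow _ _ (by omega)
      rw [pow_succ, mul_add_one, mul_comm] at hA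
      omega
    obtain ⟨d, -, hd⟩ := exists_le_card_fiber_of_mul_le_card_of_maps_to (f := col x)
      (fun _ _ => mem_univ _) univ_nonempty (by rwa [card_univ])
    obtain ⟨P, hPA, hP, c, hc⟩ := ih _ hd
    have hxP : x ∉ P := fun h => by simpa using (mem_filter.1 (hPA h)).1
    have hxPA : insert x P ⊆ A :=
      insert_subset hxA (hPA.trans ((filter_subset _ _).trans (erase_subset _ _)))
    refine ⟨insert x P, hxPA, by rw [card_insert_of_notMem hxP, hP], update c x d,
      fun y hy z hz hyz => ?_⟩
    have hzP : z ∈ P :=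
      (mem_insert.1 hz).resolve_left (lt_of_le_of_lt (min'_le A y (hxPA hy)) hyz).ne'
    rcases mem_insert.1 hy with rfl | hyP
    · simpa using (mem_filter.1 (hPA hzP)).2
    · rw [update_of_ne (ne_of_mem_of_not_mem hyP hxP), hc y hyP z hzP hyz]

theorem exists_monochromatic (col : α → α → κ) (t : ℕ) (A : Finset α)
    (hA : (Fintype.card κ + 1) ^ (Fintype.card κ * t) ≤ #A) :
    ∃ S ⊆ A, #S = t ∧ ∃ d, ∀ y ∈ S, ∀ z ∈ S, y < z → col y z = d := by
  obtain ⟨P, hPA, hP, c, hc⟩ := exists_pivots col _ A hA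
  obtain ⟨d, -, hd⟩ := exists_le_card_fiber_of_mul_le_card_of_maps_to (s := P) (f := c)
    (fun _ _ => mem_univ _) univ_nonempty (by rw [card_univ, hP])
  obtain ⟨S, hSP, hS⟩ := exists_subset_card_eq hd
  refine ⟨S, hSP.trans ((filter_subset _ _).trans hPA), hS, d, fun y hy z hz hyz => ?_⟩
  have hy' := mem_filter.1 (hSP hy)
  rw [hc y hy'.1 z (mem_filter.1 (hSP hz)).1 hyz, hy'.2]

end Ramsey

/-- A column of a matrix with any number of rows, extended by zeros. -/
abbrev Col := ℕ → Fin 2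

/-- The rows `r` carry `M` together with one more column, constant `e`. The columns need not be
distinct: those of `I_ℓ(a,b)` and `T_ℓ(a,b)` are, for `a ≠ b`. -/
def RealizesAt (F : Finset Col) {k l : ℕ} (M : Matrix (Fin k) (Fin l) (Fin 2)) (e : Fin 2)
    (r : Fin k → ℕ) : Prop :=
  (∃ u ∈ F, ∀ i, u (r i) = e) ∧ ∀ j, ∃ c ∈ F, ∀ i, c (r i) = M i j

def Realizes (F : Finset Col) {k l : ℕ} (M : Matrix (Fin k) (Fin l) (Fin 2)) (e : Fin 2) : Prop :=
  ∃ r : Fin k → ℕ, Injective r ∧ RealizesAt F M e r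

def Free (ℓ : ℕ) (F : Finset Col) : Prop :=
  ∀ a b : Fin 2, a ≠ b → ¬ Realizes F (Imat ℓ 2 a b) b ∧ ¬ Realizes F (Tmat ℓ 2 a b) a

section Patterns

variable {ℓ r : ℕ} {a b : Fin r}

theorem Imat_row_ne (hab : a ≠ b) (i : Fin ℓ) : ∃ j, Imat ℓ r a b i j ≠ b :=
  ⟨i, by simpa [Imat] using hab⟩

theorem Tmat_row_ne (hab : a ≠ b) (i : Fin ℓ) : ∃ j, Tmat ℓ r a b i j ≠ a :=
  ⟨i, by simpa [Tmat] using hab.symm⟩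

theorem Imat_transpose_injective (hab : a ≠ b) : Injective (Imat ℓ r a b)ᵀ := by
  intro j j' h
  by_contra hjj
  simpa [Imat, hjj, hab] using congrFun h j

theorem Tmat_transpose_injective (hab : a ≠ b) : Injective (Tmat ℓ r a b)ᵀ := by
  intro j j' h
  rcases lt_trichotomy j j' with hj | rfl | hj
  · simpa [Tmat, Fin.lt_def.1 hj, hab] using congrFun h j'
  · rfl
  · simpa [Tmat, Fin.lt_def.1 hj, hab] using (congrFun h j).symm

end Patterns

section Realizes

variable {F G : Finset Col} {k l : ℕ} {M : Matrix (Fin k) (Fin l) (Fin 2)} {e : Fin 2}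
  {r : Fin k → ℕ}

theorem RealizesAt.exists_ne_zero (h : RealizesAt F M e r) (hM : ∀ i, ∃ j, M i j ≠ e)
    (i : Fin k) : ∃ c ∈ F, c (r i) ≠ 0 := by
  obtain ⟨⟨u, hu, hue⟩, hc⟩ := h
  obtain ⟨j, hj⟩ := hM i
  obtain ⟨c, hcF, hcj⟩ := hc j
  by_contra! h0
  exact hj (by rw [← hcj i, ← hue i, h0 u hu, h0 c hcF])

theorem RealizesAt.ne_of_forall_eq_zero (h : RealizesAt F M e r) (hM : ∀ i, ∃ j, M i j ≠ e)
    {x : ℕ} (hx : ∀ c ∈ F, c x = 0) (i : Fin k) : r i ≠ x := by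
  obtain ⟨c, hc, hci⟩ := h.exists_ne_zero hM i
  exact fun hix => hci (hix ▸ hx c hc)

theorem realizes_Imat_of {Y : Finset ℕ} (hY : #Y = k) {a b : Fin 2}
    (hu : ∃ u ∈ F, ∀ x ∈ Y, u x = b)
    (hc : ∀ y ∈ Y, ∃ c ∈ F, ∀ x ∈ Y, c x = if x = y then a else b) :
    Realizes F (Imat k 2 a b) b := by
  have hmem := Y.orderEmbOfFin_mem hY
  obtain ⟨u, hu, hue⟩ := hu
  refine ⟨_, (Y.orderEmbOfFin hY).injective, ⟨u, hu, fun i => hue _ (hmem i)⟩, fun j => ?_⟩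
  obtain ⟨c, hcF, hcj⟩ := hc _ (hmem j)
  exact ⟨c, hcF, fun i => by simp only [hcj _ (hmem i), Imat, OrderEmbedding.eq_iff_eq]⟩

theorem realizes_Tmat_of {Y : Finset ℕ} (hY : #Y = k) {a b : Fin 2}
    (hu : ∃ u ∈ F, ∀ x ∈ Y, u x = a)
    (hc : ∀ y ∈ Y, ∃ c ∈ F, ∀ x ∈ Y, c x = if y < x then a else b) :
    Realizes F (Tmat k 2 a b) a := by
  have hmem := Y.orderEmbOfFin_mem hY
  obtain ⟨u, hu, hue⟩ := hu
  refine ⟨_, (Y.orderEmbOfFin hY).injective, ⟨u, hu, fun i => hue _ (hmem i)⟩, fun j => ?_⟩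
  obtain ⟨c, hcF, hcj⟩ := hc _ (hmem j)
  exact ⟨c, hcF, fun i => by simp only [hcj _ (hmem i), Tmat, OrderEmbedding.lt_iff_lt, Fin.lt_def]⟩

end Realizes

noncomputable def eraseRow (F : Finset Col) (x : ℕ) : Finset Col :=
  F.image (update · x 0)

noncomputable def twins (F : Finset Col) (x : ℕ) : Finset Col :=
  F.filter fun c => c x = 0 ∧ update c x 1 ∈ F

def SupportedOn (F : Finset Col) (R : Finset ℕ) : Prop :=
  ∀ c ∈ F, ∀ x ∉ R, c x = 0

section Deletion

variable {F : Finset Col} {x : ℕ}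

theorem eraseRow_apply_self {c : Col} (hc : c ∈ eraseRow F x) : c x = 0 := by
  obtain ⟨d, -, rfl⟩ := mem_image.1 hc
  exact update_self x 0 d

theorem twins_subset : twins F x ⊆ F :=
  filter_subset _ _

theorem twins_apply_self {c : Col} (hc : c ∈ twins F x) : c x = 0 :=
  (mem_filter.1 hc).2.1

theorem update_mem_of_mem_twins {c : Col} (hc : c ∈ twins F x) (v : Fin 2) :
    update c x v ∈ F := by
  obtain ⟨hcF, hc0, hc1⟩ := mem_filter.1 hc
  fin_cases v
  · simpa [← hc0] using hcF
  · exact hc1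

-- A column of `eraseRow F x` has at most two preimages, and two only if it lies in `twins F x`.
theorem card_le_card_eraseRow_add_card_twins (F : Finset Col) (x : ℕ) :
    #F ≤ #(eraseRow F x) + #(twins F x) := by
  set π : Col → Col := (update · x 0)
  set F₀ := F.filter (· x = 0)
  set F₁ := F.filter (¬ · x = 0)
  have hπ : ∀ c c' : Col, c x = c' x → π c = π c' → c = c' := by
    intro c c' hx h
    rw [← update_eq_self x c, ← update_eq_self x c', hx, ← update_idem (a := x) 0 (c' x) c,
      ← update_idem (a := x) 0 (c' x) c']
    exact congrArg (update · x (c' x)) h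
  have hinter : F₀.image π ∩ F₁.image π ⊆ twins F x := by
    intro t ht
    simp only [mem_inter, mem_image, mem_filter, F₀, F₁] at ht
    obtain ⟨⟨c, ⟨hc, hc0⟩, rfl⟩, ⟨d, ⟨hd, hd1⟩, hdc⟩⟩ := ht
    have hc' : π c = c := by simp [π, ← hc0]
    refine mem_filter.2 ⟨hc'.symm ▸ hc, update_self x 0 c, ?_⟩
    rwa [← hdc, update_idem, show (1 : Fin 2) = d x by omega, update_eq_self]
  calc #F = #(F₀.image π) + #(F₁.image π) := by
        rw [card_image_of_injOn fun c hc c' hc' => hπ c c' (by simp_all [F₀]),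
          card_image_of_injOn fun c hc c' hc' => hπ c c' (by simp_all [F₁]; omega),
          card_filter_add_card_filter_not]
    _ = #(eraseRow F x) + #(F₀.image π ∩ F₁.image π) := by
        rw [← card_union_add_card_inter, ← image_union, filter_union_filter_not_eq]
        rfl
    _ ≤ #(eraseRow F x) + #(twins F x) := by gcongr

end Deletion

section Supported

variable {F : Finset Col} {R : Finset ℕ}

theorem SupportedOn.eraseRow (h : SupportedOn F R) (x : ℕ) :
    SupportedOn (eraseRow F x) (R.erase x) := by
  intro c hc y hy
  obtain ⟨d, hd, rfl⟩ := mem_image.1 hc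
  by_cases hyx : y = x
  · rw [hyx, update_self]
  · rw [update_of_ne hyx]
    exact h d hd y fun hyR => hy (mem_erase.2 ⟨hyx, hyR⟩)

theorem SupportedOn.twins (h : SupportedOn F R) (x : ℕ) :
    SupportedOn (twins F x) (R.erase x) := by
  intro c hc y hy
  by_cases hyx : y = x
  · exact hyx ▸ twins_apply_self hc
  · exact h c (twins_subset hc) y fun hyR => hy (mem_erase.2 ⟨hyx, hyR⟩)

theorem SupportedOn.card_le_one (h : SupportedOn F ∅) : #F ≤ 1 :=
  Finset.card_le_one.2 fun c hc d hd => funext fun y => (h c hc y (notMem_empty y)).trans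
    (h d hd y (notMem_empty y)).symm

end Supported

section Free

variable {F G : Finset Col} {x k : ℕ} {a b : Fin 2} {r : Fin k → ℕ}

theorem RealizesAt.of_eraseRow {l : ℕ} {M : Matrix (Fin k) (Fin l) (Fin 2)} {e : Fin 2}
    (h : RealizesAt (eraseRow F x) M e r) (hM : ∀ i, ∃ j, M i j ≠ e) : RealizesAt F M e r := by
  have hr := h.ne_of_forall_eq_zero hM fun _ => eraseRow_apply_self
  have hlift : ∀ c ∈ eraseRow F x, ∃ d ∈ F, ∀ i, d (r i) = c (r i) := by
    intro c hc
    obtain ⟨d, hd, rfl⟩ := mem_image.1 hc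
    exact ⟨d, hd, fun i => (update_of_ne (hr i) _ _).symm⟩
  obtain ⟨⟨u, hu, hue⟩, hc⟩ := h
  obtain ⟨u', hu', hu'u⟩ := hlift u hu
  refine ⟨⟨u', hu', fun i => (hu'u i).trans (hue i)⟩, fun j => ?_⟩
  obtain ⟨c, hcG, hcj⟩ := hc j
  obtain ⟨d, hd, hdc⟩ := hlift c hcG
  exact ⟨d, hd, fun i => (hdc i).trans (hcj i)⟩

theorem Free.eraseRow {ℓ : ℕ} (hF : Free ℓ F) (x : ℕ) : Free ℓ (eraseRow F x) := by
  refine fun a b hab => ⟨?_, ?_⟩ <;> rintro ⟨r, hr, h⟩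
  · exact (hF a b hab).1 ⟨r, hr, h.of_eraseRow (Imat_row_ne hab)⟩
  · exact (hF a b hab).2 ⟨r, hr, h.of_eraseRow (Tmat_row_ne hab)⟩

-- The row `x` becomes the first row, and the new first column is the constant column changed
-- at `x`.
theorem RealizesAt.Imat_succ (h : RealizesAt G (Imat k 2 a b) b r) (hr : ∀ i, r i ≠ x)
    (hGF : ∀ c ∈ G, ∀ v, update c x v ∈ F) :
    RealizesAt F (Imat (k + 1) 2 a b) b (Fin.cons x r) := by
  obtain ⟨⟨u, hu, hue⟩, hc⟩ := h
  refine ⟨⟨update u x b, hGF u hu b, Fin.cases (by simp) fun i => by simp [hr i, hue i]⟩,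
    Fin.cases ?_ fun j => ?_⟩
  · exact ⟨update u x a, hGF u hu a,
      Fin.cases (by simp [Imat]) fun i => by simp [Imat, hr i, hue i]⟩
  · obtain ⟨c, hcG, hcj⟩ := hc j
    exact ⟨update c x b, hGF c hcG b,
      Fin.cases (by simp [Imat, (Fin.succ_ne_zero j).symm]) fun i => by simp [Imat, hr i, hcj i]⟩

theorem RealizesAt.Tmat_succ (h : RealizesAt G (Tmat k 2 a b) a r) (hr : ∀ i, r i ≠ x)
    (hGF : ∀ c ∈ G, ∀ v, update c x v ∈ F) :
    RealizesAt F (Tmat (k + 1) 2 a b) a (Fin.cons x r) := by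
  obtain ⟨⟨u, hu, hue⟩, hc⟩ := h
  refine ⟨⟨update u x a, hGF u hu a, Fin.cases (by simp) fun i => by simp [hr i, hue i]⟩,
    Fin.cases ?_ fun j => ?_⟩
  · exact ⟨update u x b, hGF u hu b,
      Fin.cases (by simp [Tmat]) fun i => by simp [Tmat, hr i, hue i]⟩
  · obtain ⟨c, hcG, hcj⟩ := hc j
    exact ⟨update c x b, hGF c hcG b,
      Fin.cases (by simp [Tmat]) fun i => by simp [Tmat, hr i, hcj i]⟩

theorem Free.twins (hF : Free (k + 1) F) (x : ℕ) : Free k (twins F x) := by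
  refine fun a b hab => ⟨?_, ?_⟩ <;> rintro ⟨r, hr, h⟩
  · have hrx := h.ne_of_forall_eq_zero (Imat_row_ne hab) fun _ => twins_apply_self
    exact (hF a b hab).1 ⟨_, Fin.cons_injective_of_injective (fun ⟨i, hi⟩ => hrx i hi) hr,
      h.Imat_succ hrx fun _ => update_mem_of_mem_twins⟩
  · have hrx := h.ne_of_forall_eq_zero (Tmat_row_ne hab) fun _ => twins_apply_self
    exact (hF a b hab).2 ⟨_, Fin.cons_injective_of_injective (fun ⟨i, hi⟩ => hrx i hi) hr,
      h.Tmat_succ hrx fun _ => update_mem_of_mem_twins⟩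

theorem Free.eq_empty (hF : Free 0 F) : F = ∅ := by
  refine eq_empty_of_forall_notMem fun c hc => (hF 0 1 zero_ne_one).1 ?_
  exact ⟨finZeroElim, fun i => i.elim0, ⟨c, hc, fun i => i.elim0⟩, fun j => j.elim0⟩

end Free

theorem card_lt_of_forall_twins_nonempty {ℓ : ℕ} {F : Finset Col} (hF : Free ℓ F)
    {X : Finset ℕ} (hX : ∀ x ∈ X, (twins F x).Nonempty) : #X < 5 ^ (4 * (ℓ + 1)) := by
  by_contra! hcard
  choose! t ht using hX
  obtain ⟨S, hSX, hS, ⟨d₁, d₂⟩, hd⟩ :=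
    exists_monochromatic (fun y z => (t y z, t z y)) (ℓ + 1) X (by simpa using hcard)
  have hS0 : S.Nonempty := card_pos.1 (by omega)
  set k := S.min' hS0
  set Y := S.erase k
  have hY : #Y = ℓ := by rw [card_erase_of_mem (min'_mem S hS0), hS, Nat.add_sub_cancel]
  have hYS : ∀ y ∈ Y, y ∈ S := fun y => mem_of_mem_erase
  have hu : t k ∈ F ∧ ∀ x ∈ Y, t k x = d₁ := by
    refine ⟨twins_subset (ht k (hSX (min'_mem S hS0))), fun x hx => ?_⟩
    have hkx : k < x := lt_of_le_of_ne (min'_le S x (hYS x hx)) (ne_of_mem_erase hx).symm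
    exact (Prod.ext_iff.1 (hd k (min'_mem S hS0) x (hYS x hx) hkx)).1
  have hver : ∀ y ∈ Y, ∀ δ, update (t y) y δ ∈ F ∧ ∀ x ∈ Y,
      update (t y) y δ x = if x = y then δ else if y < x then d₁ else d₂ := by
    intro y hy δ
    refine ⟨update_mem_of_mem_twins (ht y (hSX (hYS y hy))) δ, fun x hx => ?_⟩
    rcases lt_trichotomy x y with hxy | rfl | hxy
    · simpa [hxy.ne, hxy.not_gt] using (Prod.ext_iff.1 (hd x (hYS x hx) y (hYS y hy) hxy)).2
    · simp
    · simpa [hxy.ne', hxy] using (Prod.ext_iff.1 (hd y (hYS y hy) x (hYS x hx) hxy)).1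
  by_cases hd₁₂ : d₁ = d₂
  · subst hd₁₂
    obtain ⟨a, ha⟩ := exists_ne d₁
    refine (hF a d₁ ha).1 (realizes_Imat_of hY ⟨t k, hu⟩ fun y hy =>
      ⟨_, (hver y hy a).1, fun x hx => ?_⟩)
    simp [(hver y hy a).2 x hx]
  · refine (hF d₁ d₂ hd₁₂).2 (realizes_Tmat_of hY ⟨t k, hu⟩ fun y hy =>
      ⟨_, (hver y hy d₂).1, fun x hx => ?_⟩)
    rw [(hver y hy d₂).2 x hx]
    obtain rfl | hxy := eq_or_ne x y <;> simp [*]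

def freeBound : ℕ → ℕ
  | 0 => 0
  | k + 1 => 1 + 5 ^ (4 * (k + 2)) * freeBound k

theorem card_le_of_free_succ {k g : ℕ}
    (hg : ∀ (G : Finset Col) (R : Finset ℕ), Free k G → SupportedOn G R → #G ≤ g)
    (R : Finset ℕ) : ∀ F : Finset Col, Free (k + 1) F → SupportedOn F R →
      #F ≤ 1 + min #R (5 ^ (4 * (k + 2))) * g := by
  induction R using Finset.strongInduction with
  | H R ih =>
  intro F hF hR
  rcases R.eq_empty_or_nonempty with rfl | hR0
  · have := hR.card_le_one
    omega
  have hstep : ∀ x ∈ R, #F ≤ 1 + min (#R - 1) (5 ^ (4 * (k + 2))) * g + #(twins F x) := by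
    intro x hx
    calc #F ≤ #(eraseRow F x) + #(twins F x) := card_le_card_eraseRow_add_card_twins F x
      _ ≤ _ := by
        gcongr
        simpa [card_erase_of_mem hx] using
          ih _ (erase_ssubset hx) _ (hF.eraseRow x) (hR.eraseRow x)
  by_cases hall : ∀ x ∈ R, (twins F x).Nonempty
  · have hRH : #R ≤ 5 ^ (4 * (k + 2)) := (card_lt_of_forall_twins_nonempty hF hall).le
    obtain ⟨x, hx⟩ := hR0
    have hR1 : 1 ≤ #R := card_pos.2 ⟨x, hx⟩
    calc #F ≤ 1 + (#R - 1) * g + g := by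
          have h1 := hstep x hx
          have h2 := hg _ _ (hF.twins x) (hR.twins x)
          rw [min_eq_left (by omega)] at h1
          omega
      _ = 1 + min #R (5 ^ (4 * (k + 2))) * g := by
          rw [min_eq_left hRH, add_assoc, ← Nat.succ_mul, Nat.succ_eq_add_one,
            Nat.sub_add_cancel hR1]
  · obtain ⟨x, hx, hxe⟩ := not_forall₂.1 hall
    calc #F ≤ 1 + min (#R - 1) (5 ^ (4 * (k + 2))) * g := by
          simpa [not_nonempty_iff_eq_empty.1 hxe] using hstep x hx
      _ ≤ 1 + min #R (5 ^ (4 * (k + 2))) * g := by gcongr; omega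

theorem card_le_freeBound : ∀ (ℓ : ℕ) (F : Finset Col) (R : Finset ℕ),
    Free ℓ F → SupportedOn F R → #F ≤ freeBound ℓ
  | 0, F, _, hF, _ => by simp [hF.eq_empty]
  | k + 1, F, R, hF, hR =>
    calc #F ≤ 1 + min #R (5 ^ (4 * (k + 2))) * freeBound k :=
          card_le_of_free_succ (card_le_freeBound k) R F hF hR
      _ ≤ freeBound (k + 1) := by
          rw [freeBound]
          gcongr
          exact min_le_right _ _

theorem freeBound_succ_lt {ℓ : ℕ} (hℓ : 1 ≤ ℓ) : freeBound (ℓ + 1) < 6 ^ (6 * ℓ * (ℓ + 1)) := by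
  induction ℓ, hℓ using Nat.le_induction with
  | base => norm_num [freeBound]
  | succ ℓ hℓ ih =>
    have h5 : 0 < 5 ^ (4 * (ℓ + 3)) := by positivity
    calc freeBound (ℓ + 1 + 1) = 1 + 5 ^ (4 * (ℓ + 3)) * freeBound (ℓ + 1) := rfl
      _ ≤ 5 ^ (4 * (ℓ + 3)) * (freeBound (ℓ + 1) + 1) := by nlinarith
      _ ≤ 5 ^ (4 * (ℓ + 3)) * 6 ^ (6 * ℓ * (ℓ + 1)) := by gcongr; exact ih
      _ < 6 ^ (4 * (ℓ + 3)) * 6 ^ (6 * ℓ * (ℓ + 1)) := by gcongr; norm_num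
      _ ≤ 6 ^ (6 * (ℓ + 1) * (ℓ + 1 + 1)) := by
          rw [← pow_add]
          exact Nat.pow_le_pow_right (by norm_num) (by nlinarith)

def zeroExtCol {m n : ℕ} (A : Matrix (Fin m) (Fin n) (Fin 2)) (j : Fin n) : Col :=
  fun y => if h : y < m then A ⟨y, h⟩ j else 0

section Matrix

variable {m n : ℕ} {A : Matrix (Fin m) (Fin n) (Fin 2)}

theorem configSub_of_realizes {k l : ℕ} {M : Matrix (Fin k) (Fin l) (Fin 2)} {e : Fin 2}
    (hM : ∀ i, ∃ j, M i j ≠ e) (hMt : Injective Mᵀ)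
    (h : Realizes (univ.image (zeroExtCol A)) M e) : ConfigSub M A := by
  obtain ⟨r, hr, hre⟩ := h
  have hrm : ∀ i, r i < m := by
    intro i
    obtain ⟨c, hc, hci⟩ := hre.exists_ne_zero hM i
    obtain ⟨j, -, rfl⟩ := mem_image.1 hc
    by_contra hge
    exact hci (by simp [zeroExtCol, hge])
  have hcol : ∀ j, ∃ j', ∀ i, A ⟨r i, hrm i⟩ j' = M i j := by
    intro j
    obtain ⟨c, hc, hcj⟩ := hre.2 j
    obtain ⟨j', -, rfl⟩ := mem_image.1 hc
    exact ⟨j', fun i => by simpa [zeroExtCol, hrm i] using hcj i⟩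
  choose σ hσ using hcol
  refine ⟨fun i => ⟨r i, hrm i⟩, σ, fun i i' h => hr (congrArg Fin.val h), fun j j' h => ?_,
    fun i j => hσ j i⟩
  exact hMt (funext fun i => by simp only [Matrix.transpose_apply, ← hσ, h])

theorem free_of_avoidsF {ℓ : ℕ} (h : AvoidsF (TFam ℓ 2) A) :
    Free ℓ (univ.image (zeroExtCol A)) := fun a b hab =>
  ⟨fun hI => h _ ⟨a, b, hab, Or.inl rfl⟩
      (configSub_of_realizes (Imat_row_ne hab) (Imat_transpose_injective hab) hI),
    fun hT => h _ ⟨a, b, hab, Or.inr rfl⟩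
      (configSub_of_realizes (Tmat_row_ne hab) (Tmat_transpose_injective hab) hT)⟩

theorem card_le_freeBound_of_avoidsF {ℓ : ℕ} (hA : Simple A) (h : AvoidsF (TFam ℓ 2) A) :
    n ≤ freeBound ℓ := by
  have hinj : Injective (zeroExtCol A) := fun j j' hjj =>
    hA (funext fun i => by simpa [zeroExtCol] using congrFun hjj i)
  have hsupp : SupportedOn (univ.image (zeroExtCol A)) (range m) := by
    intro c hc y hy
    obtain ⟨j, -, rfl⟩ := mem_image.1 hc
    simp_all [zeroExtCol]
  simpa [card_image_of_injective _ hinj] using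
    card_le_freeBound ℓ _ _ (free_of_avoidsF h) hsupp

end Matrix

theorem forb_TFam_le_freeBound (m ℓ : ℕ) : forb m 2 (TFam ℓ 2) ≤ freeBound ℓ :=
  csSup_le' fun _ ⟨_, hA, h⟩ => card_le_freeBound_of_avoidsF hA h

section Configurations

variable {r k l k' l' m n : ℕ}

theorem ConfigSub.trans {M : Matrix (Fin k) (Fin l) (Fin r)} {N : Matrix (Fin k') (Fin l') (Fin r)}
    {A : Matrix (Fin m) (Fin n) (Fin r)} (hMN : ConfigSub M N) (hNA : ConfigSub N A) :
    ConfigSub M A := by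
  obtain ⟨ρ, σ, hρ, hσ, hMN⟩ := hMN
  obtain ⟨ρ', σ', hρ', hσ', hNA⟩ := hNA
  exact ⟨ρ' ∘ ρ, σ' ∘ σ, hρ'.comp hρ, hσ'.comp hσ, fun i j => by simp [hNA, hMN]⟩

theorem forb_le_forb {𝓕 𝓖 : Set (RMat r)} (h : ∀ G ∈ 𝓖, ∃ F ∈ 𝓕, ConfigSub F.mat G.mat)
    (hbdd : BddAbove {n | ∃ A : Matrix (Fin m) (Fin n) (Fin r), Simple A ∧ AvoidsF 𝓖 A}) :
    forb m r 𝓕 ≤ forb m r 𝓖 := by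
  refine csSup_le_csSup' hbdd fun n ⟨A, hA, hF⟩ => ⟨A, hA, fun G hG hGA => ?_⟩
  obtain ⟨F, hF𝓕, hFG⟩ := h G hG
  exact hF F hF𝓕 (ConfigSub.trans hFG hGA)

variable (ℓ : ℕ) (a b : Fin r)

theorem Imat_configSub_succ : ConfigSub (Imat ℓ r a b) (Imat (ℓ + 1) r a b) :=
  ⟨Fin.castSucc, Fin.castSucc, Fin.castSucc_injective _, Fin.castSucc_injective _,
    fun i j => by simp [Imat]⟩

theorem Tmat_configSub_succ : ConfigSub (Tmat ℓ r a b) (Tmat (ℓ + 1) r a b) :=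
  ⟨Fin.castSucc, Fin.castSucc, Fin.castSucc_injective _, Fin.castSucc_injective _,
    fun i j => by simp [Tmat]⟩

theorem Tmat_configSub_succ_swap : ConfigSub (Tmat ℓ r a b) (Tmat (ℓ + 1) r b a) := by
  refine ⟨fun i => i.rev.succ, fun j => j.rev.castSucc, fun i i' h => by simpa using h,
    fun j j' h => by simpa using h, fun i j => ?_⟩
  simp only [Tmat, Fin.val_succ, Fin.val_castSucc, Fin.val_rev]
  split_ifs <;> first | rfl | omega

end Configurations

theorem TFam_succ_configSub (ℓ : ℕ) :
    ∀ G ∈ TFam (ℓ + 1) 2, ∃ F ∈ ({⟨ℓ, ℓ, Imat ℓ 2 1 0⟩, ⟨ℓ, ℓ, Imat ℓ 2 0 1⟩,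
      ⟨ℓ, ℓ, Tmat ℓ 2 0 1⟩} : Set (RMat 2)), ConfigSub F.mat G.mat := by
  rintro G ⟨a, b, hab, rfl | rfl⟩ <;> fin_cases a <;> fin_cases b <;> simp at hab
  · exact ⟨⟨ℓ, ℓ, Imat ℓ 2 0 1⟩, by simp, Imat_configSub_succ ℓ 0 1⟩
  · exact ⟨⟨ℓ, ℓ, Imat ℓ 2 1 0⟩, by simp, Imat_configSub_succ ℓ 1 0⟩
  · exact ⟨⟨ℓ, ℓ, Tmat ℓ 2 0 1⟩, by simp, Tmat_configSub_succ ℓ 0 1⟩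
  · exact ⟨⟨ℓ, ℓ, Tmat ℓ 2 0 1⟩, by simp, Tmat_configSub_succ_swap ℓ 0 1⟩

end TFamBound

theorem forb_TFam_two_lt_general (ℓ m : ℕ) (hℓ : 2 ≤ ℓ) :
    forb m 2 (TFam ℓ 2) < 6 ^ (6 * ℓ * (ℓ - 1)) ∧
    forb m 2 ({⟨ℓ, ℓ, Imat ℓ 2 1 0⟩, ⟨ℓ, ℓ, Imat ℓ 2 0 1⟩, ⟨ℓ, ℓ, Tmat ℓ 2 0 1⟩} :
        Set (RMat 2)) ≤ forb m 2 (TFam (ℓ + 1) 2) ∧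
    forb m 2 (TFam (ℓ + 1) 2) < 6 ^ (6 * ℓ * (ℓ + 1)) := by
  open TFamBound in
  obtain ⟨k, rfl⟩ : ∃ k, ℓ = k + 1 := ⟨ℓ - 1, by omega⟩
  have hlt : ∀ j, 1 ≤ j → forb m 2 (TFam (j + 1) 2) < 6 ^ (6 * j * (j + 1)) := fun j hj =>
    (forb_TFam_le_freeBound m _).trans_lt (freeBound_succ_lt hj)
  refine ⟨?_, forb_le_forb (TFam_succ_configSub (k + 1)) ⟨freeBound (k + 2),
    fun _ ⟨_, hA, h⟩ => card_le_freeBound_of_avoidsF hA h⟩, hlt (k + 1) (by omega)⟩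
  rw [Nat.add_sub_cancel, mul_right_comm]
  exact hlt k (by omega)

/-- For every `ℓ ≥ 2` and `m ≥ 1`:
`forb(m, 2, 𝓣_ℓ(2)) < 6^{6ℓ(ℓ−1)}`, and consequently
`forb(m, {I_ℓ, I_ℓᶜ, T_ℓ}) ≤ forb(m, 2, 𝓣_{ℓ+1}(2)) < 6^{6ℓ(ℓ+1)}`.
Here `I_ℓ = I_ℓ(1,0)`, `I_ℓᶜ = I_ℓ(0,1)`, `T_ℓ = T_ℓ(0,1)`. -/
theorem forb_TFam_two_lt (ℓ m : ℕ) (hℓ : 2 ≤ ℓ) (hm : 1 ≤ m) :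
    forb m 2 (TFam ℓ 2) < 6 ^ (6 * ℓ * (ℓ - 1)) ∧
    forb m 2 ({⟨ℓ, ℓ, Imat ℓ 2 1 0⟩, ⟨ℓ, ℓ, Imat ℓ 2 0 1⟩, ⟨ℓ, ℓ, Tmat ℓ 2 0 1⟩} :
        Set (RMat 2)) ≤ forb m 2 (TFam (ℓ + 1) 2) ∧
    forb m 2 (TFam (ℓ + 1) 2) < 6 ^ (6 * ℓ * (ℓ + 1)) :=
  forb_TFam_two_lt_general ℓ m hℓ
end

section
/- Let ℓ ≥ 2, r ≥ 2 and t ≥ 1 be given. Then there is a constant c (depending on ℓ, r, t but not on m) such that for all m ≥ 1, forb(m, r, t·𝓣_ℓ(r)) ≤ 2r(r−1)(t−1)·m + c. -/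
/-!
View a simple `m`-rowed matrix as the set `C` of its columns, and call row `i` bad if deleting it
merges at least `K = r(r-1)(t-1) + 1` columns. Deleting a row that is not bad loses at most
`r(r-1)(t-1)` columns, so induction on `m` gives the bound once the number of bad rows is bounded
independently of `m`.

A bad row `u` carries `K` columns `f^u_p` of `C`, each with a partner in `C` that differs from it
only in row `u`. Colour a pair of bad rows `u < w` by `p ↦ (f^u_p(w), f^w_p(u))`; by Ramsey's
theorem many bad rows have a constant colour `p ↦ (x_p, y_p)`. If `x_p ≠ y_p` for some `p`, the
columns `f^u_p` form a staircase containing `t·T_ℓ(x_p, y_p)`. Otherwise, for each of these rows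
`u` and each `p`, one of `f^u_p` and its partner equals `x_p` on the other rows and differs from
`x_p` on row `u`; pigeonholing first over `p` and then over `u` produces `t·I_ℓ(w, z)`.
-/

open Finset Function
open scoped Matrix

theorem Finset.exists_fin_embedding_of_le_card {α : Type*} {s : Finset α} {n : ℕ}
    (h : n ≤ #s) :
    ∃ e : Fin n ↪ α, ∀ q, e q ∈ s := by
  obtain ⟨e⟩ := Embedding.nonempty_of_card_le (α := Fin n) (β := s) (by simpa using h)
  exact ⟨e.trans (Embedding.subtype _), fun q => (e q).2⟩

theorem exists_fin_embedding_fiber_offDiag {ι : Type*} [Fintype ι] {r n : ℕ}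
    (f : ι → Fin r × Fin r) (hf : ∀ i, (f i).1 ≠ (f i).2)
    (h : r * (r - 1) * (n - 1) < Fintype.card ι) :
    ∃ a b : Fin r, a ≠ b ∧ ∃ e : Fin n ↪ ι, ∀ q, f (e q) = (a, b) := by
  classical
  have hcard : #(univ : Finset (Fin r)).offDiag * (n - 1) < #(univ : Finset ι) := by
    rwa [offDiag_card, card_univ, Fintype.card_fin, ← Nat.mul_sub_one, card_univ]
  obtain ⟨⟨a, b⟩, hab, hfiber⟩ := exists_lt_card_fiber_of_mul_lt_card_of_maps_to
    (fun i _ => mem_offDiag.2 ⟨mem_univ _, mem_univ _, hf i⟩) hcard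
  obtain ⟨e, he⟩ := exists_fin_embedding_of_le_card (Nat.le_of_pred_lt hfiber)
  exact ⟨a, b, (mem_offDiag.1 hab).2.2, e, fun q => (mem_filter.1 (he q)).2⟩

theorem Finset.exists_endHomogeneous {α γ : Type*} [LinearOrder α] [Fintype γ]
    (f : α → α → γ) (P : ℕ) (A : Finset α) (hA : (Fintype.card γ + 1) ^ P ≤ #A) :
    ∃ s ⊆ A, #s = P ∧ ∃ g : α → γ, ∀ a ∈ s, ∀ b ∈ s, a < b → f a b = g a := by
  classical
  induction P generalizing A with
  | zero => exact ⟨∅, empty_subset _, rfl, fun a => f a a, by simp⟩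
  | succ P ih =>
    have hA₀ : A.Nonempty := card_pos.1 (lt_of_lt_of_le (by positivity) hA)
    set ξ := A.min' hA₀
    have : Nonempty γ := ⟨f ξ ξ⟩
    have hcard : #(univ : Finset γ) * (Fintype.card γ + 1) ^ P ≤ #(A.erase ξ) := by
      rw [card_erase_of_mem (A.min'_mem hA₀), card_univ]
      have hpos := Nat.one_le_pow P (Fintype.card γ + 1) (Nat.succ_pos _)
      rw [pow_succ, mul_add_one, mul_comm] at hA
      omega
    obtain ⟨y, -, hy⟩ := exists_le_card_fiber_of_mul_le_card_of_maps_to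
      (f := f ξ) (fun _ _ => mem_univ _) univ_nonempty hcard
    obtain ⟨s, hs, hsP, g, hg⟩ := ih _ hy
    have hsA : s ⊆ A.erase ξ := hs.trans (filter_subset _ _)
    have hξs : ξ ∉ s := fun h => by simpa using hsA h
    refine ⟨insert ξ s, insert_subset (A.min'_mem hA₀) (hsA.trans (erase_subset _ _)),
      by rw [card_insert_of_notMem hξs, hsP], update g ξ y, ?_⟩
    intro a ha b hb hab
    have hb' : b ∈ s := by
      rcases mem_insert.1 hb with rfl | hb
      · rcases mem_insert.1 ha with rfl | ha
        · exact absurd hab (lt_irrefl _)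
        · exact absurd hab (not_lt.2 (A.min'_le a (mem_of_mem_erase (hsA ha))))
      · exact hb
    rcases mem_insert.1 ha with rfl | ha
    · simpa using (mem_filter.1 (hs hb')).2
    · rw [update_of_ne (ne_of_mem_of_not_mem ha hξs)]
      exact hg a ha b hb' hab

def ramseyBound (k L : ℕ) : ℕ := (k + 1) ^ (k * L + 1)

theorem exists_monochromatic_orderEmbedding {α γ : Type*} [LinearOrder α] [Fintype α]
    [Fintype γ] (f : α → α → γ) {L : ℕ}
    (h : ramseyBound (Fintype.card γ) L ≤ Fintype.card α) :
    ∃ (R : Fin L ↪o α) (c : γ), ∀ k k', k < k' → f (R k) (R k') = c := by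
  classical
  obtain ⟨s, -, hs, g, hg⟩ := exists_endHomogeneous f _ univ (by simpa [ramseyBound] using h)
  obtain ⟨c, -, hc⟩ := exists_lt_card_fiber_of_mul_lt_card_of_maps_to (f := g) (t := univ)
    (fun _ _ => mem_univ _) (n := L) (by rw [hs, card_univ]; omega)
  obtain ⟨u, hu, huL⟩ := exists_subset_card_eq hc.le
  refine ⟨u.orderEmbOfFin huL, c, fun k k' hk => ?_⟩
  have hmem : ∀ k, u.orderEmbOfFin huL k ∈ s ∧ g (u.orderEmbOfFin huL k) = c := fun k =>
    mem_filter.1 (hu (orderEmbOfFin_mem _ _ _))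
  rw [hg _ (hmem k).1 _ (hmem k').1 ((OrderEmbedding.lt_iff_lt _).2 hk), (hmem k).2]

variable {r m : ℕ}

/-- `t·F ≺ A` for a matrix `A` whose set of columns is `C`. -/
def ContainsCopies (C : Finset (Fin m → Fin r)) (t : ℕ) (F : RMat r) : Prop :=
  ∃ (ρ : Fin F.rows ↪ Fin m) (h : Fin t × Fin F.cols ↪ (Fin m → Fin r)),
    (∀ x, h x ∈ C) ∧ ∀ i x, h x (ρ i) = F.mat i x.2

theorem Fin.eq_of_removeNth_eq {α : Type*} {i : Fin (m + 1)} {f g : Fin (m + 1) → α}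
    (h : i.removeNth f = i.removeNth g) (hi : f i = g i) : f = g := by
  rw [← Fin.insertNth_self_removeNth i f, h, hi, Fin.insertNth_self_removeNth]

theorem Fin.apply_eq_of_removeNth_eq {α : Type*} {i j : Fin (m + 1)} {f g : Fin (m + 1) → α}
    (h : i.removeNth f = i.removeNth g) (hj : j ≠ i) : f j = g j := by
  obtain ⟨k, rfl⟩ := Fin.exists_succAbove_eq hj
  exact congrFun h k

theorem ContainsCopies.of_image_removeNth {C : Finset (Fin (m + 1) → Fin r)} {i : Fin (m + 1)}
    {t : ℕ} {F : RMat r} (hC : ContainsCopies (C.image i.removeNth) t F) :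
    ContainsCopies C t F := by
  obtain ⟨ρ, h, hmem, hval⟩ := hC
  choose g hgC hg using fun x => mem_image.1 (hmem x)
  refine ⟨ρ.trans ⟨i.succAbove, i.succAbove_right_injective⟩,
    ⟨g, fun x y hxy => h.injective (by rw [← hg x, ← hg y, hxy])⟩, hgC, fun j x => ?_⟩
  rw [← hval, ← hg x]
  rfl

theorem ConfigIn.tCopy_of_containsCopies {n t : ℕ} {A : Matrix (Fin m) (Fin n) (Fin r)}
    {F : RMat r} (hA : ContainsCopies (univ.image Aᵀ) t F) : ConfigIn (tCopy t F) A := by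
  obtain ⟨ρ, h, hmem, hval⟩ := hA
  choose σ _ hσ using fun x => mem_image.1 (hmem x)
  have hσinj : Injective σ := fun x y hxy => h.injective (by rw [← hσ x, ← hσ y, hxy])
  refine ⟨ρ, σ ∘ finProdFinEquiv.symm, ρ.injective,
    hσinj.comp finProdFinEquiv.symm.injective, fun i j => ?_⟩
  exact (congrFun (hσ _) (ρ i)).trans (hval i _)

def IsStaircase {L : ℕ} (R : Fin L → Fin m) (F : Fin L → Fin m → Fin r) (x y : Fin r) :
    Prop :=
  ∀ k k', k < k' → F k (R k') = x ∧ F k' (R k) = y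

theorem IsStaircase.apply_ne {L : ℕ} {R : Fin L → Fin m} {F : Fin L → Fin m → Fin r}
    {x y : Fin r} (hS : IsStaircase R F x y) (hxy : x ≠ y) {k k' k'' : Fin L} (h : k < k')
    (h' : k' < k'') : F k ≠ F k'' := fun heq =>
  hxy ((hS _ _ h).1.symm.trans ((congrFun heq _).trans (hS _ _ h').2))

/-- Row `i` of `T_ℓ(x, y)` is taken at index `(2t+1)i` and the `q`-th copy of column `j` at index
`(2t+1)j + 2q + 1`; two copies are separated by the row at an index strictly between them. -/
theorem IsStaircase.containsCopies_tmat {ℓ t L : ℕ} (hL : (2 * t + 1) * ℓ ≤ L)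
    {C : Finset (Fin m → Fin r)} {R : Fin L → Fin m} (hR : Injective R)
    {F : Fin L → Fin m → Fin r} (hF : ∀ k, F k ∈ C) {x y : Fin r} (hxy : x ≠ y)
    (hS : IsStaircase R F x y) : ContainsCopies C t ⟨ℓ, ℓ, Tmat ℓ r x y⟩ := by
  have hblock : ∀ {a b : ℕ}, a < b → (2 * t + 1) * a + 2 * t + 1 ≤ (2 * t + 1) * b := by
    intro a b h
    simpa [mul_add_one, add_assoc] using Nat.mul_le_mul_left (2 * t + 1) (Nat.succ_le_of_lt h)
  have hcol : ∀ (q : Fin t) (j : Fin ℓ), (2 * t + 1) * j + 2 * q + 1 < L := fun q j => by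
    have := hblock j.2
    omega
  let ρ : Fin ℓ → Fin L := fun i => ⟨(2 * t + 1) * i, by have := hblock i.2; omega⟩
  let c : Fin t × Fin ℓ → Fin L := fun z => ⟨(2 * t + 1) * z.2 + 2 * z.1 + 1, hcol z.1 z.2⟩
  have hentry : ∀ i z, F (c z) (R (ρ i)) = Tmat ℓ r x y i z.2 := by
    intro i z
    by_cases h : z.2 < i
    · have := hblock h
      simpa [Tmat, h] using (hS (c z) (ρ i) (Fin.lt_def.2 (by simp only [c, ρ]; omega))).1
    · have := Nat.mul_le_mul_left (2 * t + 1) (not_lt.1 h)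
      simpa [Tmat, h] using (hS (ρ i) (c z) (Fin.lt_def.2 (by simp only [c, ρ]; omega))).2
  have hsep_block : ∀ z z' : Fin t × Fin ℓ, z.2 < z'.2 → F (c z) ≠ F (c z') := by
    intro z z' h heq
    have e := congrFun heq (R (ρ z'.2))
    rw [hentry, hentry] at e
    simp only [Tmat, Fin.val_fin_lt, h, ↓reduceIte, lt_self_iff_false] at e
    exact hxy e
  have hsep_copy : ∀ (q q' : Fin t) (j : Fin ℓ), q < q' → F (c (q, j)) ≠ F (c (q', j)) :=
    fun q q' j h => hS.apply_ne hxy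
      (k' := ⟨(2 * t + 1) * j + 2 * q + 2, by have := hcol q' j; omega⟩)
      (Fin.lt_def.2 (by simp [c])) (Fin.lt_def.2 (by simp [c]; omega))
  have hinj : Injective (F ∘ c) := by
    rintro ⟨q, j⟩ ⟨q', j'⟩ heq
    rcases lt_trichotomy j j' with h | rfl | h
    · exact absurd heq (hsep_block _ _ h)
    · rcases lt_trichotomy q q' with h | rfl | h
      · exact absurd heq (hsep_copy _ _ j h)
      · rfl
      · exact absurd heq.symm (hsep_copy _ _ j h)
    · exact absurd heq.symm (hsep_block _ _ h)
  exact ⟨⟨R ∘ ρ, hR.comp fun i i' h => Fin.ext (Nat.eq_of_mul_eq_mul_left (by omega)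
    (Fin.val_eq_of_eq h))⟩, ⟨F ∘ c, hinj⟩, fun z => hF _, hentry⟩

theorem exists_containsCopies_imat {ℓ t L : ℕ} (hL : r * (r - 1) * (ℓ - 1) < L)
    {C : Finset (Fin m → Fin r)} {R : Fin L → Fin m} (hR : Injective R)
    {z w : Fin L → Fin r} (hzw : ∀ u, w u ≠ z u) (e : Fin L → Fin t ↪ (Fin m → Fin r))
    (he_mem : ∀ u q, e u q ∈ C) (he_diag : ∀ u q, e u q (R u) = w u)
    (he_off : ∀ u u' q, u' ≠ u → e u q (R u') = z u) :
    ∃ a b : Fin r, a ≠ b ∧ ContainsCopies C t ⟨ℓ, ℓ, Imat ℓ r a b⟩ := by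
  obtain ⟨a, b, hab, ι, hι⟩ := exists_fin_embedding_fiber_offDiag (fun u => (w u, z u)) hzw
    (n := ℓ) (by simpa using hL)
  have hentry : ∀ i (x : Fin t × Fin ℓ), e (ι x.2) x.1 (R (ι i)) = Imat ℓ r a b i x.2 := by
    intro i x
    by_cases h : i = x.2
    · simpa [Imat, h, he_diag] using congrArg Prod.fst (hι x.2)
    · simpa [Imat, h, he_off _ _ _ (ι.injective.ne h)] using congrArg Prod.snd (hι x.2)
  refine ⟨a, b, hab, ι.trans ⟨R, hR⟩, ⟨fun x => e (ι x.2) x.1, ?_⟩, fun x => he_mem _ _,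
    hentry⟩
  rintro ⟨q, j⟩ ⟨q', j'⟩ heq
  obtain rfl : j = j' := by
    by_contra h
    have hrow := congrFun heq (R (ι j))
    simp only [hentry j (q, j), hentry j (q', j'), Imat, h, if_true, if_false] at hrow
    exact hab hrow
  exact Prod.ext ((e (ι j)).injective heq) rfl

/-- A witness that deleting row `i` merges at least `K` columns of `C`: `rep` chooses one column
of `C` over each restriction to the other rows, and the `col p` are `K` columns not chosen. -/
structure RowSplitting (C : Finset (Fin (m + 1) → Fin r)) (i : Fin (m + 1)) (K : ℕ) where
  col : Fin K ↪ (Fin (m + 1) → Fin r)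
  rep : (Fin m → Fin r) → Fin (m + 1) → Fin r
  col_mem : ∀ p, col p ∈ C
  rep_mem : ∀ p, rep (i.removeNth (col p)) ∈ C
  removeNth_rep : ∀ p, i.removeNth (rep (i.removeNth (col p))) = i.removeNth (col p)
  rep_apply_ne : ∀ p, rep (i.removeNth (col p)) i ≠ col p i

def badRows (C : Finset (Fin (m + 1) → Fin r)) (K : ℕ) : Finset (Fin (m + 1)) :=
  {i | #(C.image i.removeNth) + K ≤ #C}

theorem RowSplitting.nonempty_of_mem_badRows [NeZero r] {C : Finset (Fin (m + 1) → Fin r)}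
    {i : Fin (m + 1)} {K : ℕ} (hi : i ∈ badRows C K) :
    Nonempty (RowSplitting C i K) := by
  classical
  let rep : (Fin m → Fin r) → Fin (m + 1) → Fin r := invFunOn i.removeNth C
  have hrep : ∀ f ∈ C,
      rep (i.removeNth f) ∈ C ∧ i.removeNth (rep (i.removeNth f)) = i.removeNth f :=
    fun f hf => invFunOn_pos ⟨f, hf, rfl⟩
  have hK : K ≤ #{f ∈ C | ¬rep (i.removeNth f) = f} := by
    have hfixed : #{f ∈ C | rep (i.removeNth f) = f} ≤ #(C.image i.removeNth) :=
      card_le_card_of_injOn i.removeNth (fun f hf => mem_image_of_mem _ (mem_filter.1 hf).1)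
        fun f hf g hg hfg => by
          rw [← (mem_filter.1 hf).2, ← (mem_filter.1 hg).2]
          exact congrArg rep hfg
    have := card_filter_add_card_filter_not (s := C) (p := fun f => rep (i.removeNth f) = f)
    have h : #(C.image i.removeNth) + K ≤ #C := (mem_filter.1 hi).2
    omega
  obtain ⟨col, hcol⟩ := exists_fin_embedding_of_le_card hK
  have hcolC : ∀ p, col p ∈ C := fun p => (mem_filter.1 (hcol p)).1
  exact ⟨{ col, rep
           col_mem := hcolC
           rep_mem := fun p => (hrep _ (hcolC p)).1
           removeNth_rep := fun p => (hrep _ (hcolC p)).2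
           rep_apply_ne := fun p h =>
             (mem_filter.1 (hcol p)).2 (Fin.eq_of_removeNth_eq (hrep _ (hcolC p)).2 h) }⟩

namespace RowSplitting

variable {C : Finset (Fin (m + 1) → Fin r)} {i : Fin (m + 1)} {K : ℕ} (S : RowSplitting C i K)

def pick (Z : Fin K → Fin r) (p : Fin K) : Fin (m + 1) → Fin r :=
  if S.col p i = Z p then S.rep (i.removeNth (S.col p)) else S.col p

variable {S} {Z : Fin K → Fin r}

theorem pick_mem (p : Fin K) : S.pick Z p ∈ C := by
  unfold pick
  split_ifs
  exacts [S.rep_mem p, S.col_mem p]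

theorem pick_apply_ne (p : Fin K) : S.pick Z p i ≠ Z p := by
  unfold pick
  split_ifs with h
  exacts [h ▸ S.rep_apply_ne p, h]

theorem removeNth_pick (p : Fin K) : i.removeNth (S.pick Z p) = i.removeNth (S.col p) := by
  unfold pick
  split_ifs
  exacts [S.removeNth_rep p, rfl]

theorem eq_of_pick_eq {p q : Fin K} (hZ : Z p = Z q) (h : S.pick Z p = S.pick Z q) : p = q := by
  have hrem : i.removeNth (S.col p) = i.removeNth (S.col q) := by
    rw [← removeNth_pick, h, removeNth_pick]
  unfold pick at h
  split_ifs at h with hp hq hq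
  · exact S.col.injective (Fin.eq_of_removeNth_eq hrem (hp.trans (hZ.trans hq.symm)))
  · exact absurd (congrFun (hrem ▸ h) i) (S.rep_apply_ne q)
  · exact absurd (congrFun (hrem ▸ h.symm) i) (S.rep_apply_ne p)
  · exact S.col.injective h

theorem exists_pick_embedding {t : ℕ} (hK : r * (r - 1) * (t - 1) < K) (Z : Fin K → Fin r) :
    ∃ z w : Fin r, w ≠ z ∧ ∃ e : Fin t ↪ (Fin (m + 1) → Fin r),
      ∀ q, e q ∈ C ∧ e q i = w ∧ ∃ p, Z p = z ∧ ∀ j ≠ i, e q j = S.col p j := by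
  obtain ⟨w, z, hwz, ι, hι⟩ := exists_fin_embedding_fiber_offDiag
    (fun p => (S.pick Z p i, Z p)) (fun p => pick_apply_ne p) (by simpa using hK)
  simp only [Prod.ext_iff] at hι
  refine ⟨z, w, hwz, ⟨S.pick Z ∘ ι, fun q q' h =>
    ι.injective (eq_of_pick_eq ((hι q).2.trans (hι q').2.symm) h)⟩, fun q =>
    ⟨pick_mem _, (hι q).1, ι q, (hι q).2,
      fun j hj => Fin.apply_eq_of_removeNth_eq (removeNth_pick _) hj⟩⟩

end RowSplitting

def badRowBound (r ℓ t : ℕ) : ℕ :=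
  ramseyBound ((r * r) ^ (r * (r - 1) * (t - 1) + 1))
    ((2 * t + 1) * ℓ + r * (r - 1) * (ℓ - 1) + 1)

theorem exists_containsCopies_of_badRowBound_le [NeZero r] {ℓ t : ℕ}
    {C : Finset (Fin (m + 1) → Fin r)}
    (h : badRowBound r ℓ t ≤ #(badRows C (r * (r - 1) * (t - 1) + 1))) :
    ∃ F ∈ TFam ℓ r, ContainsCopies C t F := by
  have S : ∀ i : badRows C (r * (r - 1) * (t - 1) + 1),
      RowSplitting C i (r * (r - 1) * (t - 1) + 1) := fun i =>
    (RowSplitting.nonempty_of_mem_badRows i.2).some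
  obtain ⟨R, c, hc⟩ := exists_monochromatic_orderEmbedding
    (fun u w => fun p => ((S u).col p w, (S w).col p u))
    (L := (2 * t + 1) * ℓ + r * (r - 1) * (ℓ - 1) + 1) (by simpa [badRowBound] using h)
  let row : Fin _ → Fin (m + 1) := fun k => R k
  have hrow : Injective row := Subtype.val_injective.comp R.injective
  have hc' : ∀ k k' p, k < k' →
      (S (R k)).col p (row k') = (c p).1 ∧ (S (R k')).col p (row k) = (c p).2 :=
    fun k k' p h => Prod.ext_iff.1 (congrFun (hc k k' h) p)
  by_cases hxy : ∃ p, (c p).1 ≠ (c p).2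
  · obtain ⟨p, hp⟩ := hxy
    exact ⟨_, ⟨_, _, hp, Or.inr rfl⟩, IsStaircase.containsCopies_tmat (by omega) hrow
      (fun k => (S (R k)).col_mem p) hp fun k k' h => hc' k k' p h⟩
  push Not at hxy
  choose z w hwz e he using fun u =>
    (S (R u)).exists_pick_embedding (t := t) (by omega) (fun p => (c p).1)
  obtain ⟨a, b, hab, hcopy⟩ := exists_containsCopies_imat (ℓ := ℓ) (by omega) hrow hwz e
    (fun u q => (he u q).1) (fun u q => (he u q).2.1) fun u u' q hne => by
      obtain ⟨p, hp, hoff⟩ := (he u q).2.2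
      rw [hoff _ (hrow.ne hne), ← hp]
      rcases lt_or_gt_of_ne hne with h | h
      · rw [(hc' u' u p h).2, hxy p]
      · exact (hc' u u' p h).1
  exact ⟨_, ⟨a, b, hab, Or.inl rfl⟩, hcopy⟩

theorem card_le_of_not_containsCopies [NeZero r] {ℓ t : ℕ} (C : Finset (Fin m → Fin r))
    (hC : ¬∃ F ∈ TFam ℓ r, ContainsCopies C t F) :
    #C ≤ r * (r - 1) * (t - 1) * m + r ^ badRowBound r ℓ t := by
  have hr : 0 < r := NeZero.pos r
  have hcard : ∀ {m} (C : Finset (Fin m → Fin r)), #C ≤ r ^ m := fun C => by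
    simpa using card_le_univ C
  induction m with
  | zero => exact (hcard C).trans (by simpa using Nat.one_le_pow _ _ hr)
  | succ m ih =>
    by_cases hm : m + 1 ≤ badRowBound r ℓ t
    · exact (hcard C).trans ((Nat.pow_le_pow_right hr hm).trans (Nat.le_add_left _ _))
    have hbad : #(badRows C (r * (r - 1) * (t - 1) + 1)) < #(univ : Finset (Fin (m + 1))) := by
      have := lt_of_not_ge fun h => hC (exists_containsCopies_of_badRowBound_le h)
      simp only [card_univ, Fintype.card_fin]
      omega
    obtain ⟨i, -, hi⟩ := exists_mem_notMem_of_card_lt_card hbad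
    have hdel := ih (C.image i.removeNth) fun ⟨F, hF, hcopy⟩ =>
      hC ⟨F, hF, hcopy.of_image_removeNth⟩
    simp only [badRows, mem_filter, mem_univ, true_and, not_le] at hi
    rw [mul_add_one]
    omega

theorem forb_tTFam_linear_upper_general (ℓ r t : ℕ) (hr : 2 ≤ r) :
    ∃ c : ℕ, ∀ m : ℕ, 1 ≤ m →
      forb m r (tCopy t '' TFam ℓ r) ≤ 2 * r * (r - 1) * (t - 1) * m + c := by
  have : NeZero r := ⟨by omega⟩
  refine ⟨r ^ badRowBound r ℓ t, fun m _ => csSup_le' ?_⟩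
  rintro n ⟨A, hA, hAv⟩
  have hcard := card_le_of_not_containsCopies (univ.image Aᵀ) fun ⟨F, hF, hcopy⟩ =>
    hAv _ ⟨F, hF, rfl⟩ (ConfigIn.tCopy_of_containsCopies hcopy)
  rw [card_image_of_injective _ (show Injective Aᵀ from hA), card_univ, Fintype.card_fin]
    at hcard
  calc n ≤ _ := hcard
    _ ≤ _ := by gcongr; omega

/-- Let `ℓ ≥ 2`, `r ≥ 2`, `t ≥ 1`. Then there is a constant `c`
(depending on `ℓ, r, t` but not on `m`) with
`forb(m, r, t·𝓣_ℓ(r)) ≤ 2r(r−1)(t−1)·m + c` for all `m ≥ 1`. -/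
theorem forb_tTFam_linear_upper (ℓ r t : ℕ) (hℓ : 2 ≤ ℓ) (hr : 2 ≤ r) (ht : 1 ≤ t) :
    ∃ c : ℕ, ∀ m : ℕ, 1 ≤ m →
      forb m r (tCopy t '' TFam ℓ r) ≤ 2 * r * (r - 1) * (t - 1) * m + c :=
  forb_tTFam_linear_upper_general ℓ r t hr
end

section
/- Let t ≥ 1, r ≥ 2 and ℓ ≥ ⌈log₂ t⌉ + 3 be given. Then there is a constant c (depending on ℓ, r, t but not on m) such that for all m, forb(m, r, t·𝓣_ℓ(r)) ≥ r(r−1)(t−1)·m − c. -/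
/-!
The lower bound comes from an explicit matrix. Split the `m` rows into `n = m - w` "normal"
rows and `w = ⌈log₂ t⌉` "code" rows. For every ordered pair `a ≠ b`, every normal row `x` and
every `s < t - 1`, take the column that is `b` on the normal rows except for an `a` in row `x`,
and spells `s` in binary on the code rows (digit `1 ↦ a`, `0 ↦ b`). These
`r(r-1)(t-1)n` columns are distinct as soon as `n ≥ 3`; the `w` code rows and the case
`m < w + 3` are absorbed by `c = r(r-1)(t-1)(w+3)`.

Any `ℓ ≥ w + 3` rows contain three normal rows `ρ q, ρ i₁, ρ i₂` with `q < i₁, i₂`. In both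
`I_ℓ(a,b)` and `T_ℓ(a,b)`, column `q` takes one value `u` at `i₁` and `i₂` and another value
`u'` at `q`; a column of the construction with this pattern has background `u`, mark `u'` and
marked row `ρ q`, so only its code `s` is free and at most `t - 1` columns have it. Hence
`t` copies of column `q` cannot be found.
-/

open Finset

theorem le_forb_of_avoidsF {r m n : ℕ} {𝓕 : Set (RMat r)} {A : Matrix (Fin m) (Fin n) (Fin r)}
    (hA : Simple A) (h𝓕 : AvoidsF 𝓕 A) : n ≤ forb m r 𝓕 :=
  le_csSup ⟨r ^ m, fun _ ⟨_, hB, _⟩ => by simpa using Fintype.card_le_of_injective _ hB⟩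
    ⟨A, hA, h𝓕⟩

theorem ConfigIn.exists_rows_of_tCopy {r m n t : ℕ} {F : RMat r}
    {A : Matrix (Fin m) (Fin n) (Fin r)} (h : ConfigIn (tCopy t F) A) :
    ∃ ρ : Fin F.rows → Fin m, Function.Injective ρ ∧
      ∀ q, t ≤ #{j | ∀ i, A (ρ i) j = F.mat i q} := by
  obtain ⟨ρ, σ, hρ, hσ, hA⟩ := h
  refine ⟨ρ, hρ, fun q => ?_⟩
  have hcopy : ∀ k : Fin t, σ (finProdFinEquiv (k, q)) ∈
      ({j | ∀ i, A (ρ i) j = F.mat i q} : Finset (Fin n)) := fun k => by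
    simp only [mem_filter, mem_univ, true_and]
    exact fun i => by simpa [tCopy] using hA i (finProdFinEquiv (k, q))
  calc t = #(univ : Finset (Fin t)) := by simp
    _ ≤ _ := card_le_card_of_injOn _ (fun k _ => hcopy k)
      fun k _ k' _ hk => congrArg Prod.fst (finProdFinEquiv.injective (hσ hk))

theorem exists_three_rows_lt {ℓ n w : ℕ} {ρ : Fin ℓ → Fin (n + w)} (hρ : Function.Injective ρ)
    (hℓ : w + 3 ≤ ℓ) :
    ∃ q i₁ i₂ : Fin ℓ, q < i₁ ∧ i₁ < i₂ ∧ (ρ q : ℕ) < n ∧ (ρ i₁ : ℕ) < n ∧ (ρ i₂ : ℕ) < n := by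
  have hcode : #{i | ¬ (ρ i : ℕ) < n} ≤ w := by
    simpa using card_le_card_of_injOn (fun i => (ρ i : ℕ) - n) (t := range w)
      (fun i hi => by
        simp only [coe_filter, mem_univ, true_and, Set.mem_ofPred_eq, coe_range,
          Set.mem_Iio] at hi ⊢
        omega)
      (fun i hi j hj hij => hρ (Fin.ext (by
        simp only [coe_filter, mem_univ, true_and, Set.mem_ofPred_eq] at hi hj hij
        omega)))
  have hnormal : 3 ≤ #{i | (ρ i : ℕ) < n} := by
    have := card_filter_add_card_filter_not (s := univ) (fun i : Fin ℓ => (ρ i : ℕ) < n)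
    simp only [card_univ, Fintype.card_fin] at this
    omega
  obtain ⟨T, hTS, hT⟩ := exists_subset_card_eq hnormal
  let f := T.orderEmbOfFin hT
  have hf : ∀ k, (ρ (f k) : ℕ) < n := fun k => by
    simpa using hTS (T.orderEmbOfFin_mem hT k)
  exact ⟨f 0, f 1, f 2, f.strictMono (by decide), f.strictMono (by decide), hf 0, hf 1, hf 2⟩

theorem exists_column_pattern_of_mem_TFam {ℓ r n w : ℕ} {F : RMat r} (hF : F ∈ TFam ℓ r)
    (hℓ : w + 3 ≤ ℓ) {ρ : Fin F.rows → Fin (n + w)} (hρ : Function.Injective ρ) :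
    ∃ (q : Fin F.cols) (i₀ i₁ i₂ : Fin F.rows), i₁ ≠ i₂ ∧ (ρ i₀ : ℕ) < n ∧
      (ρ i₁ : ℕ) < n ∧ (ρ i₂ : ℕ) < n ∧ F.mat i₂ q = F.mat i₁ q ∧ F.mat i₀ q ≠ F.mat i₁ q := by
  obtain ⟨a, b, hab, rfl | rfl⟩ := hF <;>
  · obtain ⟨q, i₁, i₂, h₁, h₂, hq, hi₁, hi₂⟩ := exists_three_rows_lt hρ hℓ
    have h₂' : q < i₂ := h₁.trans h₂
    refine ⟨q, q, i₁, i₂, h₂.ne, hq, hi₁, hi₂, ?_, ?_⟩ <;>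
      simp [Imat, Tmat, h₁.ne', h₂'.ne', Fin.lt_def.mp h₁, Fin.lt_def.mp h₂', hab, hab.symm]

def markedColumn {r : ℕ} (n : ℕ) (a b : Fin r) (x s i : ℕ) : Fin r :=
  if i < n then (if i = x then a else b) else (if s.testBit (i - n) then a else b)

section markedColumn

variable {r n : ℕ} {a b : Fin r} {x s i : ℕ}

theorem markedColumn_of_ne (hi : i < n) (hx : i ≠ x) : markedColumn n a b x s i = b := by
  simp [markedColumn, hi, hx]

theorem markedColumn_self (hx : x < n) : markedColumn n a b x s x = a := by
  simp [markedColumn, hx]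

theorem markedColumn_add (k : ℕ) :
    markedColumn n a b x s (n + k) = if s.testBit k then a else b := by
  simp [markedColumn]

theorem markedColumn_pin {u u' : Fin r} {y₁ y₂ y₃ : ℕ} (hu : u' ≠ u) (hy : y₁ ≠ y₂)
    (hy₁ : y₁ < n) (hy₂ : y₂ < n) (hy₃ : y₃ < n)
    (h₁ : markedColumn n a b x s y₁ = u) (h₂ : markedColumn n a b x s y₂ = u)
    (h₃ : markedColumn n a b x s y₃ = u') : a = u' ∧ b = u ∧ x = y₃ := by
  have hb : b = u := by
    rcases eq_or_ne y₁ x with rfl | h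
    · rw [← h₂, markedColumn_of_ne hy₂ hy.symm]
    · rw [← h₁, markedColumn_of_ne hy₁ h]
  obtain rfl : x = y₃ := by
    by_contra h
    exact hu (h₃.symm.trans ((markedColumn_of_ne hy₃ (Ne.symm h)).trans hb))
  exact ⟨(markedColumn_self hy₃).symm.trans h₃, hb, rfl⟩

theorem eq_of_markedColumn_eq {w : ℕ} {a' b' : Fin r} {x' s' : ℕ} (hn : 3 ≤ n) (hab : a ≠ b)
    (hx : x < n) (hs : s < 2 ^ w) (hs' : s' < 2 ^ w)
    (h : ∀ i < n + w, markedColumn n a b x s i = markedColumn n a' b' x' s' i) :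
    a = a' ∧ b = b' ∧ x = x' ∧ s = s' := by
  obtain ⟨y₁, y₂, hy₁, hy₂, hy, hy₁x, hy₂x⟩ :
      ∃ y₁ y₂, y₁ < 3 ∧ y₂ < 3 ∧ y₁ ≠ y₂ ∧ y₁ ≠ x ∧ y₂ ≠ x :=
    ⟨if x = 0 then 1 else 0, if x = 2 then 1 else 2, by split_ifs <;> omega⟩
  have hrow : ∀ y < n, markedColumn n a' b' x' s' y = markedColumn n a b x s y :=
    fun y hy => (h y (by omega)).symm
  obtain ⟨rfl, rfl, rfl⟩ := markedColumn_pin hab hy (by omega) (by omega) hx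
    ((hrow y₁ (by omega)).trans (markedColumn_of_ne (by omega) hy₁x))
    ((hrow y₂ (by omega)).trans (markedColumn_of_ne (by omega) hy₂x))
    ((hrow x hx).trans (markedColumn_self hx))
  refine ⟨rfl, rfl, rfl, Nat.eq_of_testBit_eq fun k => ?_⟩
  rcases lt_or_ge k w with hk | hk
  · have hbit := h (n + k) (by omega)
    rw [markedColumn_add, markedColumn_add] at hbit
    revert hbit
    cases s.testBit k <;> cases s'.testBit k <;> simp [hab, hab.symm]
  · have hw : 2 ^ w ≤ 2 ^ k := Nat.pow_le_pow_right two_pos hk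
    rw [Nat.testBit_eq_false_of_lt (hs.trans_le hw), Nat.testBit_eq_false_of_lt (hs'.trans_le hw)]

end markedColumn

abbrev MarkedIdx (r n k : ℕ) := {p : Fin r × Fin r // p.1 ≠ p.2} × Fin n × Fin k

def MarkedIdx.column {r n k : ℕ} (c : MarkedIdx r n k) : ℕ → Fin r :=
  markedColumn n c.1.1.1 c.1.1.2 c.2.1 c.2.2

noncomputable def markedMatrix (r n k w : ℕ) :
    Matrix (Fin (n + w)) (Fin (Fintype.card (MarkedIdx r n k))) (Fin r) :=
  fun i j => ((Fintype.equivFin _).symm j).column i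

section markedMatrix

variable {r n k w : ℕ}

theorem card_markedIdx : Fintype.card (MarkedIdx r n k) = r * (r - 1) * (n * k) := by
  have hpairs : #{p : Fin r × Fin r | p.1 ≠ p.2} = r * (r - 1) := by
    rw [show ({p : Fin r × Fin r | p.1 ≠ p.2} : Finset _) = univ.offDiag by ext; simp,
      offDiag_card, card_univ, Fintype.card_fin, Nat.mul_sub_one]
  rw [Fintype.card_prod, Fintype.card_prod, Fintype.card_fin, Fintype.card_fin,
    Fintype.card_subtype, hpairs]

theorem MarkedIdx.column_injective (hn : 3 ≤ n) (hk : k ≤ 2 ^ w) :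
    Function.Injective fun (c : MarkedIdx r n k) (i : Fin (n + w)) => c.column i := by
  rintro ⟨⟨⟨a, b⟩, hab⟩, x, s⟩ ⟨⟨⟨a', b'⟩, hab'⟩, x', s'⟩ h
  obtain ⟨rfl, rfl, hx, hs⟩ := eq_of_markedColumn_eq hn hab x.2 (s.2.trans_le hk)
    (s'.2.trans_le hk) fun i hi => congrFun h ⟨i, hi⟩
  obtain rfl := Fin.ext hx
  obtain rfl := Fin.ext hs
  rfl

theorem markedMatrix_simple (hn : 3 ≤ n) (hk : k ≤ 2 ^ w) : Simple (markedMatrix r n k w) :=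
  (MarkedIdx.column_injective hn hk).comp (Fintype.equivFin _).symm.injective

theorem card_markedMatrix_pattern_le {u u' : Fin r} {y₁ y₂ y₃ : Fin (n + w)} (hu : u' ≠ u)
    (hy : y₁ ≠ y₂) (hy₁ : (y₁ : ℕ) < n) (hy₂ : (y₂ : ℕ) < n) (hy₃ : (y₃ : ℕ) < n) :
    #{j | markedMatrix r n k w y₁ j = u ∧ markedMatrix r n k w y₂ j = u ∧
      markedMatrix r n k w y₃ j = u'} ≤ k := by
  let e := (Fintype.equivFin (MarkedIdx r n k)).symm
  have hpin : ∀ j ∈ ({j | markedMatrix r n k w y₁ j = u ∧ markedMatrix r n k w y₂ j = u ∧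
      markedMatrix r n k w y₃ j = u'} : Finset _),
      (e j).1.1.1 = u' ∧ (e j).1.1.2 = u ∧ ((e j).2.1 : ℕ) = y₃ := fun j hj => by
    simp only [mem_filter, mem_univ, true_and] at hj
    exact markedColumn_pin hu (Fin.val_ne_of_ne hy) hy₁ hy₂ hy₃ hj.1 hj.2.1 hj.2.2
  simpa using card_le_card_of_injOn (fun j => (e j).2.2) (t := univ) (fun _ _ => mem_univ _)
    fun j hj j' hj' h => by
      obtain ⟨ha, hb, hx⟩ := hpin j hj
      obtain ⟨ha', hb', hx'⟩ := hpin j' hj'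
      exact e.injective <| Prod.ext
        (Subtype.ext (Prod.ext (ha.trans ha'.symm) (hb.trans hb'.symm)))
        (Prod.ext (Fin.ext (hx.trans hx'.symm)) h)

theorem markedMatrix_avoidsF {t ℓ : ℕ} (hk : k < t) (hℓ : w + 3 ≤ ℓ) :
    AvoidsF (tCopy t '' TFam ℓ r) (markedMatrix r n k w) := by
  rintro _ ⟨F, hF, rfl⟩ hconf
  obtain ⟨ρ, hρ, hcopies⟩ := hconf.exists_rows_of_tCopy
  obtain ⟨q, i₀, i₁, i₂, h₁₂, h₀, h₁, h₂, hu, hu'⟩ := exists_column_pattern_of_mem_TFam hF hℓ hρ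
  have hsub : #{j | ∀ i, markedMatrix r n k w (ρ i) j = F.mat i q} ≤
      #{j | markedMatrix r n k w (ρ i₁) j = F.mat i₁ q ∧
        markedMatrix r n k w (ρ i₂) j = F.mat i₁ q ∧
        markedMatrix r n k w (ρ i₀) j = F.mat i₀ q} :=
    card_le_card fun j hj => by
      simp only [mem_filter, mem_univ, true_and] at hj ⊢
      exact ⟨hj i₁, hu ▸ hj i₂, hj i₀⟩
  have hfew := card_markedMatrix_pattern_le (k := k) hu' (hρ.ne h₁₂) h₁ h₂ h₀
  have hmany := hcopies q
  omega

end markedMatrix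

theorem mul_le_forb_tTFam {t r ℓ n w : ℕ} (ht : 1 ≤ t) (hn : 3 ≤ n) (hw : t - 1 ≤ 2 ^ w)
    (hℓ : w + 3 ≤ ℓ) : r * (r - 1) * (t - 1) * n ≤ forb (n + w) r (tCopy t '' TFam ℓ r) := by
  have hforb := le_forb_of_avoidsF (markedMatrix_simple (r := r) (k := t - 1) hn hw)
    (markedMatrix_avoidsF (n := n) (k := t - 1) (t := t) (by omega) hℓ)
  rwa [card_markedIdx, mul_comm n, ← mul_assoc] at hforb

theorem forb_tTFam_lower_linear_general (t r ℓ : ℕ) (ht : 1 ≤ t)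
    (hℓ : Nat.clog 2 t + 3 ≤ ℓ) :
    ∃ c : ℕ, ∀ m : ℕ,
      r * (r - 1) * (t - 1) * m ≤ forb m r (tCopy t '' TFam ℓ r) + c := by
  set w := Nat.clog 2 t
  refine ⟨r * (r - 1) * (t - 1) * (w + 3), fun m => ?_⟩
  rcases lt_or_ge m (w + 3) with hm | hm
  · exact le_add_left (Nat.mul_le_mul_left _ hm.le)
  obtain ⟨n, rfl⟩ : ∃ n, m = n + w := ⟨m - w, by omega⟩
  have hforb := mul_le_forb_tTFam (r := r) (n := n) ht (by omega)
    ((Nat.sub_le t 1).trans (Nat.le_pow_clog one_lt_two t)) hℓ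
  calc r * (r - 1) * (t - 1) * (n + w)
      ≤ r * (r - 1) * (t - 1) * n + r * (r - 1) * (t - 1) * (w + 3) := by
        rw [← mul_add]; gcongr; omega
    _ ≤ _ := Nat.add_le_add_right hforb _

/-- Let `t ≥ 1`, `r ≥ 2` and `ℓ ≥ ⌈log₂ t⌉ + 3`. Then there is a
constant `c` (depending on `ℓ, r, t` but not on `m`) such that for all `m`,
`forb(m, r, t·𝓣_ℓ(r)) ≥ r(r−1)(t−1)·m − c` (stated subtraction-free over `ℕ`). -/
theorem forb_tTFam_lower_linear (t r ℓ : ℕ) (ht : 1 ≤ t) (hr : 2 ≤ r)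
    (hℓ : Nat.clog 2 t + 3 ≤ ℓ) :
    ∃ c : ℕ, ∀ m : ℕ,
      r * (r - 1) * (t - 1) * m ≤ forb m r (tCopy t '' TFam ℓ r) + c :=
  forb_tTFam_lower_linear_general t r ℓ ht hℓ
end

section
/- (Balogh–Bollobás.) For every ℓ ≥ 2 and every m ≥ 1, forb(m, {I_ℓ, I_ℓ^c, T_ℓ}) ≤ (2ℓ)^{2^ℓ}. That is, every m-rowed simple (0,1)-matrix with more than (2ℓ)^{2^ℓ} columns contains I_ℓ, I_ℓ^c, or T_ℓ as a configuration. -/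
/-!
Read a column of the matrix as the set of rows carrying a `1`; the three configurations become
incidence patterns between points and members of a set family. Let `f c` bound the size of
families with no `I_ℓ`, no `I_ℓᶜ` and no `T_c`, and fix a member `A`. Members with the same
nonempty trace `u` on `A` are determined by their parts outside `A`, and these parts carry no
`T_c`: a point of `u` and the column `A` would extend it to a `T_{c+1}`. So each such class has at
most `f c` members. Take `H ⊆ A` minimal such that every trace other than `A` misses a point of
`H`. Then `|H| < ℓ`, since the traces witnessing minimality form an `I_|H|ᶜ`, and the traces
missing a fixed `h ∈ H` carry no `T_c` (add the row `h` and the column `A`). Hence there are at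
most `1 + ℓ f c` traces and at most `f c (1 + ℓ f c)` members meeting `A`. The members disjoint
from `A` carry no `I_{ℓ-1}`, so iterating over `A` gives `f (c+1) ≤ 1 + ℓ f c (1 + ℓ f c)`,
and induction gives `(2ℓ)² f c ≤ (2ℓ)^(2^c)`.
-/

open Finset

section Patterns

variable {X : Type*}

/-- Row `i` of the `k × k` incidence pattern `P` is realized by the point `r i` and column `j` by
the member `C j`; neither `r` nor `C` is required to be injective. -/
def HasPattern (k : ℕ) (P : Fin k → Fin k → Prop) (F : Finset (Finset X)) : Prop :=
  ∃ r : Fin k → X, ∃ C : Fin k → Finset X, (∀ j, C j ∈ F) ∧ ∀ i j, r i ∈ C j ↔ P i j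

theorem hasPattern_zero (P : Fin 0 → Fin 0 → Prop) (F : Finset (Finset X)) :
    HasPattern 0 P F :=
  ⟨Fin.elim0, Fin.elim0, Fin.rec0, Fin.rec0⟩

variable {k : ℕ} {P : Fin k → Fin k → Prop} {F D : Finset (Finset X)}

theorem HasPattern.of_trace [DecidableEq X] {R : Finset X} (hD : ∀ u ∈ D, ∃ S ∈ F, S ∩ R = u)
    (hP : ∀ i, ∃ j, P i j) : HasPattern k P D → HasPattern k P F := by
  rintro ⟨r, C, hC, hrC⟩
  choose S hSF hSC using fun j => hD (C j) (hC j)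
  have hrR : ∀ i, r i ∈ R := fun i =>
    have ⟨j, hij⟩ := hP i
    (mem_inter.mp ((hSC j).symm ▸ (hrC i j).mpr hij)).2
  refine ⟨r, S, hSF, fun i j => ?_⟩
  rw [← hrC, ← hSC, mem_inter, and_iff_left (hrR i)]

theorem HasPattern.eq_succ_of_filter_disjoint [DecidableEq X] {A : Finset X} {p : X}
    (hA : A ∈ F) (hp : p ∈ A) :
    HasPattern k (· = ·) (F.filter (Disjoint · A)) → HasPattern (k + 1) (· = ·) F := by
  rintro ⟨r, C, hC, hrC⟩
  have hCA : ∀ j, Disjoint (C j) A := fun j => (mem_filter.mp (hC j)).2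
  refine ⟨Fin.cons p r, Fin.cons A C, Fin.cases hA fun j => (mem_filter.mp (hC j)).1,
    fun i j => ?_⟩
  cases i using Fin.cases <;> cases j using Fin.cases
  · simpa using hp
  · exact iff_of_false (disjoint_right.mp (hCA _) hp) (Fin.succ_ne_zero _).symm
  · simpa using disjoint_left.mp (hCA _) ((hrC _ _).mpr rfl)
  · simpa using hrC _ _

theorem HasPattern.le_succ_of_inter_compl [DecidableEq X] [Fintype X] {A : Finset X} {p : X}
    (hA : A ∈ F) (hp : p ∈ A) (hD : ∀ v ∈ D, ∃ S ∈ F, p ∈ S ∧ S ∩ Aᶜ = v) :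
    HasPattern k (· ≤ ·) D → HasPattern (k + 1) (· ≤ ·) F := by
  rintro ⟨r, C, hC, hrC⟩
  choose S hSF hpS hSC using fun j => hD (C j) (hC j)
  have hrA : ∀ i, r i ∉ A := fun i =>
    mem_compl.mp (mem_inter.mp ((hSC i).symm ▸ (hrC i i).mpr le_rfl)).2
  have hrS : ∀ i j, r i ∈ S j ↔ i ≤ j := fun i j => by
    simpa [← hSC, hrA i] using hrC i j
  refine ⟨Fin.cons p r, Fin.cons A S, Fin.cases hA hSF, fun i j => ?_⟩
  cases i using Fin.cases <;> cases j using Fin.cases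
  · simpa using hp
  · simpa using hpS _
  · simpa using hrA _
  · simpa using hrS _ _

theorem HasPattern.le_succ_of_inter [DecidableEq X] {A : Finset X} {h : X} (hA : A ∈ F)
    (hh : h ∈ A) (hD : ∀ u ∈ D, h ∉ u ∧ ∃ S ∈ F, S ∩ A = u) :
    HasPattern k (· ≤ ·) D → HasPattern (k + 1) (· ≤ ·) F := by
  rintro ⟨r, C, hC, hrC⟩
  choose S hSF hSC using fun j => (hD (C j) (hC j)).2
  have hrA : ∀ i, r i ∈ A := fun i => (mem_inter.mp ((hSC i).symm ▸ (hrC i i).mpr le_rfl)).2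
  have hhS : ∀ j, h ∉ S j := fun j hj =>
    (hD (C j) (hC j)).1 (hSC j ▸ mem_inter.mpr ⟨hj, hh⟩)
  have hrS : ∀ i j, r i ∈ S j ↔ i ≤ j := fun i j => by
    simpa [← hSC, hrA i] using hrC i j
  refine ⟨Fin.snoc r h, Fin.snoc S A,
    Fin.lastCases (by simpa using hA) (fun j => by simpa using hSF j), fun i j => ?_⟩
  cases i using Fin.lastCases <;> cases j using Fin.lastCases
  · simpa using hh
  · simpa [Fin.castSucc_lt_last] using hhS _
  · simpa [Fin.le_last] using hrA _
  · simpa using hrS _ _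

def AvoidsPatterns (ℓ c : ℕ) (F : Finset (Finset X)) : Prop :=
  ¬ HasPattern ℓ (· = ·) F ∧ ¬ HasPattern ℓ (· ≠ ·) F ∧ ¬ HasPattern c (· ≤ ·) F

end Patterns

section Transversal

variable {X : Type*} [DecidableEq X] {ℓ : ℕ} {U : Finset (Finset X)}

theorem hasPattern_ne_of_forall_erase_subset {H : Finset X} (hH : ℓ ≤ H.card)
    (hcrit : ∀ h ∈ H, ∃ u ∈ U, h ∉ u ∧ H.erase h ⊆ u) : HasPattern ℓ (· ≠ ·) U := by
  obtain ⟨e⟩ : Nonempty (Fin ℓ ↪ H) := Function.Embedding.nonempty_of_card_le (by simpa using hH)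
  choose u huU hu hHu using fun i : Fin ℓ => hcrit (e i) (e i).2
  refine ⟨fun i => e i, u, huU, fun i j => ?_⟩
  by_cases hij : i = j
  · subst hij
    simpa using hu i
  · refine iff_of_true (hHu j (mem_erase.mpr ⟨fun h => hij ?_, (e i).2⟩)) hij
    exact e.injective (Subtype.ext h)

theorem exists_card_lt_of_not_hasPattern_ne {A : Finset X} (hU : ∀ u ∈ U, ¬ A ⊆ u)
    (hIc : ¬ HasPattern ℓ (· ≠ ·) U) : ∃ H ⊆ A, H.card < ℓ ∧ ∀ u ∈ U, ∃ h ∈ H, h ∉ u := by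
  set 𝓗 := A.powerset.filter fun H => ∀ u ∈ U, ∃ h ∈ H, h ∉ u
  have hA : A ∈ 𝓗 := mem_filter.mpr ⟨mem_powerset_self A, fun u hu => not_subset.mp (hU u hu)⟩
  obtain ⟨H, hH𝓗, hmin⟩ := 𝓗.exists_min_image card ⟨A, hA⟩
  obtain ⟨hHA, hHU⟩ := mem_filter.mp hH𝓗
  refine ⟨H, mem_powerset.mp hHA, not_le.mp fun hℓ => hIc ?_, hHU⟩
  refine hasPattern_ne_of_forall_erase_subset hℓ fun h hh => ?_
  have hcov : ¬ ∀ u ∈ U, ∃ h' ∈ H.erase h, h' ∉ u := fun hcov =>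
    (card_erase_lt_of_mem hh).not_ge <| hmin _ <| mem_filter.mpr
      ⟨mem_powerset.mpr ((erase_subset h H).trans (mem_powerset.mp hHA)), hcov⟩
  push Not at hcov
  obtain ⟨u, hu, hHu⟩ := hcov
  refine ⟨u, hu, fun hhu => ?_, fun h' hh' => hHu h' hh'⟩
  obtain ⟨h', hh', hh'u⟩ := hHU u hu
  by_cases h'h : h' = h
  · exact hh'u (h'h ▸ hhu)
  · exact hh'u (hHu h' (mem_erase.mpr ⟨h'h, hh'⟩))

end Transversal

section Counting

variable {X : Type*} [DecidableEq X] {ℓ c g : ℕ} {F D : Finset (Finset X)} {A : Finset X}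

theorem AvoidsPatterns.of_trace {c' : ℕ} {R : Finset X} (hℓ : 2 ≤ ℓ)
    (hD : ∀ u ∈ D, ∃ S ∈ F, S ∩ R = u) (hF : AvoidsPatterns ℓ c' F)
    (hT : HasPattern c (· ≤ ·) D → HasPattern c' (· ≤ ·) F) : AvoidsPatterns ℓ c D := by
  have : Nontrivial (Fin ℓ) := Fin.nontrivial_iff_two_le.mpr hℓ
  exact ⟨fun h => hF.1 (h.of_trace hD fun i => ⟨i, rfl⟩),
    fun h => hF.2.1 (h.of_trace hD fun i => (exists_ne i).imp fun _ => Ne.symm),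
    fun h => hF.2.2 (hT h)⟩

theorem card_filter_notMem_image_inter_le (hℓ : 2 ≤ ℓ)
    (hg : ∀ D : Finset (Finset X), AvoidsPatterns ℓ c D → D.card ≤ g)
    (hF : AvoidsPatterns ℓ (c + 1) F) (hA : A ∈ F)
    {h : X} (hh : h ∈ A) : ((F.image (· ∩ A)).filter (h ∉ ·)).card ≤ g := by
  have hD : ∀ u ∈ (F.image (· ∩ A)).filter (h ∉ ·), ∃ S ∈ F, S ∩ A = u := fun u hu =>
    mem_image.mp (mem_filter.mp hu).1
  exact hg _ (AvoidsPatterns.of_trace hℓ hD hF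
    (HasPattern.le_succ_of_inter hA hh fun u hu => ⟨(mem_filter.mp hu).2, hD u hu⟩))

theorem card_image_inter_le (hℓ : 2 ≤ ℓ)
    (hg : ∀ D : Finset (Finset X), AvoidsPatterns ℓ c D → D.card ≤ g)
    (hF : AvoidsPatterns ℓ (c + 1) F) (hA : A ∈ F) : (F.image (· ∩ A)).card ≤ 1 + ℓ * g := by
  set U := (F.image (· ∩ A)).filter (¬ A ⊆ ·)
  have hUF : ∀ u ∈ U, ∃ S ∈ F, S ∩ A = u := fun u hu => mem_image.mp (mem_filter.mp hu).1
  have hU : AvoidsPatterns ℓ (c + 1) U :=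
    AvoidsPatterns.of_trace hℓ hUF hF fun h => h.of_trace hUF fun i => ⟨i, le_rfl⟩
  obtain ⟨H, hHA, hHℓ, hHU⟩ :=
    exists_card_lt_of_not_hasPattern_ne (fun u hu => (mem_filter.mp hu).2) hU.2.1
  have hcover : F.image (· ∩ A) ⊆
      insert A (H.biUnion fun h => (F.image (· ∩ A)).filter (h ∉ ·)) := by
    intro u hu
    by_cases hAu : A ⊆ u
    · obtain ⟨S, -, rfl⟩ := mem_image.mp hu
      exact mem_insert.mpr (Or.inl (inter_subset_right.antisymm hAu))
    · obtain ⟨h, hh, hhu⟩ := hHU u (mem_filter.mpr ⟨hu, hAu⟩)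
      exact mem_insert_of_mem (mem_biUnion.mpr ⟨h, hh, mem_filter.mpr ⟨hu, hhu⟩⟩)
  calc (F.image (· ∩ A)).card
      ≤ (H.biUnion fun h => (F.image (· ∩ A)).filter (h ∉ ·)).card + 1 :=
        (card_le_card hcover).trans (card_insert_le _ _)
    _ ≤ H.card * g + 1 := by
        gcongr
        exact card_biUnion_le_card_mul _ _ _ fun h hh =>
          card_filter_notMem_image_inter_le hℓ hg hF hA (hHA hh)
    _ ≤ 1 + ℓ * g := by nlinarith

theorem card_le_of_not_hasPattern_eq {B : ℕ} (d : ℕ) :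
    ∀ F : Finset (Finset X), (∀ A ∈ F, (F.filter fun S => ¬ Disjoint S A).card ≤ B) →
      ¬ HasPattern d (· = ·) F → F.card ≤ 1 + d * B := by
  induction d with
  | zero => exact fun F _ hF => absurd (hasPattern_zero _ F) hF
  | succ d ih =>
    intro F hB hF
    by_cases hne : ∃ A ∈ F, A.Nonempty
    · obtain ⟨A, hA, p, hp⟩ := hne
      have hdisj : (F.filter (Disjoint · A)).card ≤ 1 + d * B :=
        ih _ (fun A' hA' => (card_le_card (filter_subset_filter _ (filter_subset _ F))).trans
          (hB A' (mem_filter.mp hA').1))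
          fun h => hF (h.eq_succ_of_filter_disjoint hA hp)
      have hmeet := hB A hA
      rw [← card_filter_add_card_filter_not (Disjoint · A), Nat.succ_mul]
      omega
    · push Not at hne
      refine (card_le_one.mpr fun S hS S' hS' => ?_).trans (Nat.le_add_right 1 _)
      rw [hne S hS, hne S' hS']

variable [Fintype X]

theorem card_filter_inter_eq_le (hℓ : 2 ≤ ℓ)
    (hg : ∀ D : Finset (Finset X), AvoidsPatterns ℓ c D → D.card ≤ g)
    (hF : AvoidsPatterns ℓ (c + 1) F) (hA : A ∈ F) {u : Finset X} (hu : u.Nonempty)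
    (huA : u ⊆ A) : (F.filter (· ∩ A = u)).card ≤ g := by
  obtain ⟨p, hp⟩ := hu
  have hsplit : ∀ S ∈ F.filter (· ∩ A = u), S = u ∪ S ∩ Aᶜ := fun S hS => by
    rw [← (mem_filter.mp hS).2]
    exact sup_inf_inf_compl.symm
  have hinj : Set.InjOn (· ∩ Aᶜ) (F.filter (· ∩ A = u)) := fun S hS S' hS' h => by
    rw [hsplit S hS, hsplit S' hS']
    exact congrArg (u ∪ ·) h
  rw [← card_image_of_injOn hinj]
  refine hg _ (AvoidsPatterns.of_trace hℓ (R := Aᶜ) ?_ hF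
    (HasPattern.le_succ_of_inter_compl hA (huA hp) ?_))
  · intro v hv
    obtain ⟨S, hS, rfl⟩ := mem_image.mp hv
    exact ⟨S, (mem_filter.mp hS).1, rfl⟩
  · intro v hv
    obtain ⟨S, hS, rfl⟩ := mem_image.mp hv
    obtain ⟨hSF, hSA⟩ := mem_filter.mp hS
    exact ⟨S, hSF, (mem_inter.mp (hSA ▸ hp)).1, rfl⟩

theorem card_filter_not_disjoint_le (hℓ : 2 ≤ ℓ)
    (hg : ∀ D : Finset (Finset X), AvoidsPatterns ℓ c D → D.card ≤ g)
    (hF : AvoidsPatterns ℓ (c + 1) F) (hA : A ∈ F) :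
    (F.filter fun S => ¬ Disjoint S A).card ≤ g * (1 + ℓ * g) := by
  refine (card_le_mul_card_image_of_maps_to (t := F.image (· ∩ A))
    (fun S hS => mem_image_of_mem _ (mem_filter.mp hS).1) g fun u hu => ?_).trans
    (Nat.mul_le_mul_left g (card_image_inter_le hℓ hg hF hA))
  rcases u.eq_empty_or_nonempty with rfl | hu'
  · simp [filter_filter, disjoint_iff_inter_eq_empty]
  · obtain ⟨S, -, rfl⟩ := mem_image.mp hu
    exact (card_le_card (filter_subset_filter _ (filter_subset _ F))).trans
      (card_filter_inter_eq_le hℓ hg hF hA hu' inter_subset_right)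

def patternBound (ℓ : ℕ) : ℕ → ℕ
  | 0 => 0
  | c + 1 => 1 + ℓ * (patternBound ℓ c * (1 + ℓ * patternBound ℓ c))

theorem card_le_patternBound (hℓ : 2 ≤ ℓ) :
    ∀ (c : ℕ) (F : Finset (Finset X)), AvoidsPatterns ℓ c F → F.card ≤ patternBound ℓ c
  | 0, F, hF => absurd (hasPattern_zero _ F) hF.2.2
  | c + 1, F, hF => card_le_of_not_hasPattern_eq ℓ F
      (fun _ hA => card_filter_not_disjoint_le hℓ (card_le_patternBound hℓ c) hF hA) hF.1

end Counting

theorem sq_mul_patternBound_le {ℓ : ℕ} (hℓ : 1 ≤ ℓ) (c : ℕ) :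
    (2 * ℓ) ^ 2 * patternBound ℓ c ≤ (2 * ℓ) ^ 2 ^ c := by
  induction c with
  | zero => simp [patternBound]
  | succ c ih =>
    rcases Nat.eq_zero_or_pos (patternBound ℓ c) with hg | hg
    · simp only [patternBound, hg, mul_zero, add_zero, mul_one]
      exact Nat.pow_le_pow_right (by omega) (Nat.le_self_pow (Nat.succ_ne_zero c) 2)
    · calc (2 * ℓ) ^ 2 * patternBound ℓ (c + 1)
          ≤ (2 * ℓ) ^ 2 * ((2 * ℓ) ^ 2 * patternBound ℓ c ^ 2) := by
            gcongr
            have hℓg : 1 ≤ ℓ * patternBound ℓ c := Nat.mul_pos hℓ hg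
            simp only [patternBound]
            nlinarith
        _ = ((2 * ℓ) ^ 2 * patternBound ℓ c) ^ 2 := by ring
        _ ≤ ((2 * ℓ) ^ 2 ^ c) ^ 2 := by gcongr
        _ = (2 * ℓ) ^ 2 ^ (c + 1) := by rw [← pow_mul, pow_succ]

section Matrices

variable {m n k : ℕ} {A : Matrix (Fin m) (Fin n) (Fin 2)}

def columnSets (A : Matrix (Fin m) (Fin n) (Fin 2)) : Finset (Finset (Fin m)) :=
  univ.image fun j => univ.filter fun i => A i j = 1

theorem Fin.two_eq_of_eq_one_iff : ∀ {a b : Fin 2}, (a = 1 ↔ b = 1) → a = b := by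
  decide

theorem card_columnSets (hA : Simple A) : (columnSets A).card = n := by
  rw [columnSets, card_image_of_injective, card_univ, Fintype.card_fin]
  intro j j' h
  exact hA (funext fun i => Fin.two_eq_of_eq_one_iff (by simpa using Finset.ext_iff.mp h i))

theorem configSub_of_hasPattern {M : Matrix (Fin k) (Fin k) (Fin 2)} {P : Fin k → Fin k → Prop}
    (hM : ∀ i j, M i j = 1 ↔ P i j) (hrow : ∀ i i', (∀ j, P i j ↔ P i' j) → i = i')
    (hcol : ∀ j j', (∀ i, P i j ↔ P i j') → j = j') (h : HasPattern k P (columnSets A)) :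
    ConfigSub M A := by
  obtain ⟨r, C, hC, hrC⟩ := h
  choose σ _ hσ using fun j => mem_image.mp (hC j)
  have key : ∀ i j, A (r i) (σ j) = 1 ↔ P i j := fun i j => by
    simpa [← hσ j] using hrC i j
  refine ⟨r, σ, fun i i' h => hrow i i' fun j => ?_, fun j j' h => hcol j j' fun i => ?_,
    fun i j => Fin.two_eq_of_eq_one_iff ((key i j).trans (hM i j).symm)⟩
  · rw [← key, ← key, h]
  · rw [← key, ← key, h]

theorem not_hasPattern_eq_of_not_configSub (h : ¬ ConfigSub (Imat k 2 1 0) A) :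
    ¬ HasPattern k (· = ·) (columnSets A) := fun hP =>
  h (configSub_of_hasPattern (fun i j => by simp [Imat]) (fun i _ h => ((h i).mp rfl).symm)
    (fun j _ h => (h j).mp rfl) hP)

theorem not_hasPattern_ne_of_not_configSub (h : ¬ ConfigSub (Imat k 2 0 1) A) :
    ¬ HasPattern k (· ≠ ·) (columnSets A) := fun hP =>
  h (configSub_of_hasPattern (fun i j => by simp [Imat])
    (fun i i' h => not_not.mp fun hne => (h i).mpr (Ne.symm hne) rfl)
    (fun j _ h => not_not.mp fun hne => (h j).mpr hne rfl) hP)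

theorem not_hasPattern_le_of_not_configSub (h : ¬ ConfigSub (Tmat k 2 0 1) A) :
    ¬ HasPattern k (· ≤ ·) (columnSets A) := fun hP =>
  h (configSub_of_hasPattern (fun i j => by simp [Tmat])
    (fun i i' h => le_antisymm ((h i').mpr le_rfl) ((h i).mp le_rfl))
    (fun j j' h => le_antisymm ((h j).mp le_rfl) ((h j').mpr le_rfl)) hP)

end Matrices

theorem balogh_bollobas_general (ℓ m : ℕ) (hℓ : 2 ≤ ℓ) :
    forb m 2 ({⟨ℓ, ℓ, Imat ℓ 2 1 0⟩, ⟨ℓ, ℓ, Imat ℓ 2 0 1⟩, ⟨ℓ, ℓ, Tmat ℓ 2 0 1⟩} :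
        Set (RMat 2)) ≤ (2 * ℓ) ^ (2 ^ ℓ) := by
  refine csSup_le' ?_
  rintro n ⟨A, hA, hAv⟩
  have hF : AvoidsPatterns ℓ ℓ (columnSets A) :=
    ⟨not_hasPattern_eq_of_not_configSub (hAv ⟨ℓ, ℓ, Imat ℓ 2 1 0⟩ (by simp)),
      not_hasPattern_ne_of_not_configSub (hAv ⟨ℓ, ℓ, Imat ℓ 2 0 1⟩ (by simp)),
      not_hasPattern_le_of_not_configSub (hAv ⟨ℓ, ℓ, Tmat ℓ 2 0 1⟩ (by simp))⟩
  calc n = (columnSets A).card := (card_columnSets hA).symm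
    _ ≤ patternBound ℓ ℓ := card_le_patternBound hℓ ℓ _ hF
    _ ≤ (2 * ℓ) ^ 2 * patternBound ℓ ℓ := Nat.le_mul_of_pos_left _ (by positivity)
    _ ≤ (2 * ℓ) ^ 2 ^ ℓ := sq_mul_patternBound_le (by omega) ℓ

/-- (Balogh–Bollobás.) For every `ℓ ≥ 2` and `m ≥ 1`,
`forb(m, {I_ℓ, I_ℓᶜ, T_ℓ}) ≤ (2ℓ)^{2^ℓ}`, where `I_ℓ = I_ℓ(1,0)`,
`I_ℓᶜ = I_ℓ(0,1)` and `T_ℓ = T_ℓ(0,1)`. -/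
theorem balogh_bollobas (ℓ m : ℕ) (hℓ : 2 ≤ ℓ) (hm : 1 ≤ m) :
    forb m 2 ({⟨ℓ, ℓ, Imat ℓ 2 1 0⟩, ⟨ℓ, ℓ, Imat ℓ 2 0 1⟩, ⟨ℓ, ℓ, Tmat ℓ 2 0 1⟩} :
        Set (RMat 2)) ≤ (2 * ℓ) ^ (2 ^ ℓ) :=
  balogh_bollobas_general ℓ m hℓ
end
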